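/- arXiv:2602.15815 — 9 statements merged into one kernel-verified Lean document; each statement's English description precedes it below -/
import Mathlib

section
/- A distribution L on the extended reals ℝ ∪ {∞} is the privacy loss distribution of some pair of probability measures (P,Q) (i.e., the law of log(dP/dQ) under P) if and only if E_{Z∼L}[e^{-Z}] ≤ 1. -/
open MeasureTheory Filter Set
open scoped ENNReal NNReal

noncomputable def privacyLoss {Ω : Type*} [MeasurableSpace Ω] (P Q : Measure Ω) (ω : Ω) : EReal :=
  let p := P.rnDeriv (P + Q) ω
  let q := Q.rnDeriv (P + Q) ω
  if q = 0 then ⊤ else if p = 0 then ⊥ else ((Real.log (p.toReal / q.toReal) : ℝ) : EReal)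

/-- The privacy loss distribution of `P` versus `Q`: the law of `log (dP/dQ)` under `P`. -/
noncomputable def pld {Ω : Type*} [MeasurableSpace Ω] (P Q : Measure Ω) : Measure EReal :=
  P.map (privacyLoss P Q)

/-- `e^{-z}` for `z : EReal`, valued in `ℝ≥0∞`. -/
noncomputable def expNegE (z : EReal) : ℝ≥0∞ :=
  if z = ⊤ then 0 else if z = ⊥ then ⊤ else ENNReal.ofReal (Real.exp (-z.toReal))

/-!
Off a `P`-null set the privacy loss is `-log (dQ/dP)`, so
`E_{pld P Q}[e^{-Z}] = ∫ dQ/dP dP ≤ Q Ω = 1`. Conversely, since `e^{-(-∞)} = ∞`, the bound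
`E_L[e^{-Z}] ≤ 1` forces `L {-∞} = 0`; the Esscher tilt `Q` of `L` then has `dQ/dL = e^{-z}`,
its singular part being the atom at `-∞`, so the privacy loss of `(L, Q)` is the identity
`L`-a.e. and `pld L Q = L`.
-/

lemma expNegE_eq_exp_neg : expNegE = fun z ↦ EReal.exp (-z) := by
  funext z
  induction z using EReal.rec <;> simp [expNegE, ← EReal.coe_neg]

lemma measurable_expNegE : Measurable expNegE := by
  rw [expNegE_eq_exp_neg]
  exact EReal.measurable_exp.comp measurable_neg

lemma measure_bot_eq_zero_of_lintegral_expNegE_ne_top {L : Measure EReal}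
    (h : ∫⁻ z, expNegE z ∂L ≠ ∞) : L {⊥} = 0 := by
  contrapose! h
  refine lintegral_eq_top_of_measure_eq_top_ne_zero measurable_expNegE.aemeasurable ?_
  convert h
  ext z
  induction z using EReal.rec <;> simp [expNegE]

section PrivacyLoss

variable {Ω : Type*} [MeasurableSpace Ω] {P Q : Measure Ω}

lemma privacyLoss_eq_neg_log {ω : Ω} (hp₀ : P.rnDeriv (P + Q) ω ≠ 0)
    (hp : P.rnDeriv (P + Q) ω ≠ ∞) (hq : Q.rnDeriv (P + Q) ω ≠ ∞) :
    privacyLoss P Q ω = -ENNReal.log (Q.rnDeriv (P + Q) ω / P.rnDeriv (P + Q) ω) := by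
  by_cases hq₀ : Q.rnDeriv (P + Q) ω = 0
  · simp [privacyLoss, hq₀]
  · have hpos : 0 < (Q.rnDeriv (P + Q) ω / P.rnDeriv (P + Q) ω).toReal :=
      ENNReal.toReal_pos (by simp [hq₀, hp]) (ENNReal.div_ne_top hq hp₀)
    rw [← ENNReal.ofReal_toReal (ENNReal.div_ne_top hq hp₀), ENNReal.log_ofReal_of_pos hpos,
      ENNReal.toReal_div, ← EReal.coe_neg, ← Real.log_inv, inv_div]
    simp [privacyLoss, hq₀, hp₀]

variable [SigmaFinite P] [SigmaFinite Q]

lemma privacyLoss_ae_eq_neg_log_rnDeriv :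
    privacyLoss P Q =ᵐ[P] fun ω ↦ -ENNReal.log (Q.rnDeriv P ω) := by
  have hP : P ≪ P + Q := Measure.AbsolutelyContinuous.rfl.add_right Q
  filter_upwards [Measure.rnDeriv_pos hP, (P.rnDeriv_lt_top (P + Q)).filter_mono hP.ae_le,
    (Q.rnDeriv_lt_top (P + Q)).filter_mono hP.ae_le, add_comm Q P ▸ Q.rnDeriv_eq_div_rnDeriv_add P]
    with ω hp₀ hp hq hratio
  rw [privacyLoss_eq_neg_log hp₀.ne' hp.ne hq.ne, hratio]

lemma pld_eq_map_neg_log_rnDeriv :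
    pld P Q = P.map fun ω ↦ -ENNReal.log (Q.rnDeriv P ω) :=
  Measure.map_congr privacyLoss_ae_eq_neg_log_rnDeriv

lemma lintegral_expNegE_pld :
    ∫⁻ z, expNegE z ∂(pld P Q) = ∫⁻ ω, Q.rnDeriv P ω ∂P := by
  rw [pld_eq_map_neg_log_rnDeriv, lintegral_map measurable_expNegE (by fun_prop)]
  simp [expNegE_eq_exp_neg]

end PrivacyLoss

noncomputable def esscherTilt (L : Measure EReal) : Measure EReal :=
  L.withDensity expNegE + (1 - ∫⁻ z, expNegE z ∂L) • Measure.dirac ⊥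

section EsscherTilt

variable {L : Measure EReal}

lemma isProbabilityMeasure_esscherTilt (h : ∫⁻ z, expNegE z ∂L ≤ 1) :
    IsProbabilityMeasure (esscherTilt L) := by
  constructor
  simp [esscherTilt, add_tsub_cancel_of_le h]

lemma rnDeriv_esscherTilt [SigmaFinite L] (h : ∫⁻ z, expNegE z ∂L ≤ 1) :
    (esscherTilt L).rnDeriv L =ᵐ[L] expNegE := by
  have hI : ∫⁻ z, expNegE z ∂L ≠ ∞ := (h.trans_lt ENNReal.one_lt_top).ne
  have : IsFiniteMeasure (L.withDensity expNegE) := isFiniteMeasure_withDensity hI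
  set c := 1 - ∫⁻ z, expNegE z ∂L
  have : IsFiniteMeasure (c • Measure.dirac (⊥ : EReal)) :=
    Measure.smul_finite _ (ENNReal.sub_ne_top ENNReal.one_ne_top)
  have hbot : L {⊥} = 0 := measure_bot_eq_zero_of_lintegral_expNegE_ne_top hI
  have hsing : c • Measure.dirac (⊥ : EReal) ⟂ₘ L :=
    .smul _ ⟨{⊥}ᶜ, (measurableSet_singleton ⊥).compl, by simp, by simpa using hbot⟩
  exact (Measure.rnDeriv_add_of_mutuallySingular _ _ _ hsing).trans
    (Measure.rnDeriv_withDensity L measurable_expNegE)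

lemma pld_esscherTilt [SigmaFinite L] (h : ∫⁻ z, expNegE z ∂L ≤ 1) : pld L (esscherTilt L) = L := by
  have := isProbabilityMeasure_esscherTilt h
  rw [pld_eq_map_neg_log_rnDeriv]
  refine (Measure.map_congr ?_).trans Measure.map_id
  filter_upwards [rnDeriv_esscherTilt h] with z hz
  simp [hz, expNegE_eq_exp_neg]

end EsscherTilt

theorem stmt0_general (L : Measure EReal) [IsProbabilityMeasure L] :
    (∃ (Ω : Type) (_ : MeasurableSpace Ω) (P Q : Measure Ω),
        IsProbabilityMeasure P ∧ IsProbabilityMeasure Q ∧ L = pld P Q) ↔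
      ∫⁻ z, expNegE z ∂L ≤ 1 := by
  constructor
  · rintro ⟨Ω, _, P, Q, _, _, rfl⟩
    rw [lintegral_expNegE_pld, ← measure_univ (μ := Q)]
    exact Measure.lintegral_rnDeriv_le
  · intro h
    exact ⟨EReal, _, L, esscherTilt L, ‹_›, isProbabilityMeasure_esscherTilt h,
      (pld_esscherTilt h).symm⟩

/-- A probability distribution `L` on `ℝ ∪ {∞}` (no mass at `-∞`) is the privacy loss
distribution of some pair of probability measures `(P, Q)` iff `E_{Z∼L}[e^{-Z}] ≤ 1`. -/
theorem stmt0 (L : Measure EReal) [IsProbabilityMeasure L] (hbot : L {⊥} = 0) :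
    (∃ (Ω : Type) (_ : MeasurableSpace Ω) (P Q : Measure Ω),
        IsProbabilityMeasure P ∧ IsProbabilityMeasure Q ∧ L = pld P Q) ↔
      ∫⁻ z, expNegE z ∂L ≤ 1 :=
  stmt0_general L
end

section
/- For probability measures P, Q on Ω and any x > 0, the hockey-stick divergence satisfies H_x(P‖Q) = E_{Z∼PLD(P‖Q)}[max(0, 1 − x e^{-Z})]. -/
open MeasureTheory Filter Set
open scoped ENNReal NNReal

/-- The integrand `max (0, 1 - x e^{-z})` for `z : EReal` (so `z = ∞` gives `1`). -/
noncomputable def hsTerm (x : ℝ) (z : EReal) : ℝ :=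
  if z = ⊤ then 1 else if z = ⊥ then 0 else max 0 (1 - x * Real.exp (-z.toReal))

/-- Hockey-stick divergence `H_x(P‖Q) = sup_E P(E) - x Q(E)` over measurable events. -/
noncomputable def hsDiv {Ω : Type*} [MeasurableSpace Ω] (x : ℝ) (P Q : Measure Ω) : ℝ :=
  ⨆ E : {E : Set Ω // MeasurableSet E}, ((P E).toReal - x * (Q E).toReal)

/-!
Write `p, q` for the densities of `P, Q` with respect to `ν = P + Q`. For every event `E`,
`P(E) - x Q(E) = ∫_E (p - x q) dν`, which is largest for `E = {p > x q}`; hence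
`H_x(P‖Q) = ∫ max (0, p - x q) dν`. On the other hand, the privacy loss is `log (p / q)`, so
`max (0, 1 - x e^{-Z})` evaluated at it equals `max (0, p - x q) / p`, and integrating against
`P = p ν` gives the same integral.
-/

section PositivePart

variable {Ω : Type*} [MeasurableSpace Ω] {μ : Measure Ω} {f : Ω → ℝ}

lemma setIntegral_le_integral_max_zero (hf : Integrable f μ) {s : Set Ω} (hs : MeasurableSet s) :
    ∫ ω in s, f ω ∂μ ≤ ∫ ω, max 0 (f ω) ∂μ := by
  have hf_pos : Integrable (fun ω ↦ max 0 (f ω)) μ := by simpa only [max_comm] using hf.pos_part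
  calc ∫ ω in s, f ω ∂μ ≤ ∫ ω in s, max 0 (f ω) ∂μ :=
        setIntegral_mono_on hf.integrableOn hf_pos.integrableOn hs fun ω _ ↦ le_max_right _ _
    _ ≤ ∫ ω, max 0 (f ω) ∂μ := setIntegral_le_integral hf_pos (.of_forall fun ω ↦ le_max_left _ _)

lemma setIntegral_pos_eq_integral_max_zero (hf : Measurable f) :
    ∫ ω in {ω | 0 < f ω}, f ω ∂μ = ∫ ω, max 0 (f ω) ∂μ := by
  rw [← integral_indicator (measurableSet_lt measurable_const hf)]
  congr 1 with ω
  by_cases hω : 0 < f ω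
  · simp [hω, hω.le]
  · simp [hω, le_of_not_gt hω]

end PositivePart

section HockeyStick

variable {Ω : Type*} [MeasurableSpace Ω] {P Q ν : Measure Ω}

lemma measureReal_sub_mul_eq_setIntegral_rnDeriv [IsFiniteMeasure P] [IsFiniteMeasure Q]
    [SigmaFinite ν] (hP : P ≪ ν) (hQ : Q ≪ ν) (x : ℝ) (E : Set Ω) :
    P.real E - x * Q.real E =
      ∫ ω in E, ((P.rnDeriv ν ω).toReal - x * (Q.rnDeriv ν ω).toReal) ∂ν := by
  rw [integral_sub Measure.integrable_toReal_rnDeriv.integrableOn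
      (Measure.integrable_toReal_rnDeriv.const_mul x).integrableOn,
    integral_const_mul, Measure.setIntegral_toReal_rnDeriv hP,
    Measure.setIntegral_toReal_rnDeriv hQ]

lemma hsDiv_eq_integral_max_zero_rnDeriv [IsFiniteMeasure P] [IsFiniteMeasure Q]
    [SigmaFinite ν] (hP : P ≪ ν) (hQ : Q ≪ ν) (x : ℝ) :
    hsDiv x P Q = ∫ ω, max 0 ((P.rnDeriv ν ω).toReal - x * (Q.rnDeriv ν ω).toReal) ∂ν := by
  set g : Ω → ℝ := fun ω ↦ (P.rnDeriv ν ω).toReal - x * (Q.rnDeriv ν ω).toReal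
  have hg_meas : Measurable g := (Measure.measurable_rnDeriv P ν).ennreal_toReal.sub
    ((Measure.measurable_rnDeriv Q ν).ennreal_toReal.const_mul x)
  have hg_int : Integrable g ν := Measure.integrable_toReal_rnDeriv.sub
    (Measure.integrable_toReal_rnDeriv.const_mul x)
  have hvalue (E : Set Ω) : (P E).toReal - x * (Q E).toReal = ∫ ω in E, g ω ∂ν :=
    measureReal_sub_mul_eq_setIntegral_rnDeriv hP hQ x E
  have hbound (E : {E : Set Ω // MeasurableSet E}) :
      (P E).toReal - x * (Q E).toReal ≤ ∫ ω, max 0 (g ω) ∂ν :=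
    (hvalue E).trans_le (setIntegral_le_integral_max_zero hg_int E.2)
  refine le_antisymm (ciSup_le hbound) ?_
  have hattained : (P {ω | 0 < g ω}).toReal - x * (Q {ω | 0 < g ω}).toReal =
      ∫ ω, max 0 (g ω) ∂ν := by
    rw [hvalue, setIntegral_pos_eq_integral_max_zero hg_meas]
  exact hattained.ge.trans <| le_ciSup (f := fun E : {E : Set Ω // MeasurableSet E} ↦
      (P E).toReal - x * (Q E).toReal) ⟨_, forall_mem_range.mpr hbound⟩
    ⟨_, measurableSet_lt measurable_const hg_meas⟩

end HockeyStick

section PrivacyLoss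

variable {Ω : Type*} [MeasurableSpace Ω]

lemma measurable_privacyLoss (P Q : Measure Ω) : Measurable (privacyLoss P Q) := by
  have hp := Measure.measurable_rnDeriv P (P + Q)
  have hq := Measure.measurable_rnDeriv Q (P + Q)
  refine Measurable.ite (hq (measurableSet_singleton 0)) measurable_const
    (Measurable.ite (hp (measurableSet_singleton 0)) measurable_const ?_)
  exact measurable_coe_real_ereal.comp <| Real.measurable_log.comp <|
    hp.ennreal_toReal.div hq.ennreal_toReal

lemma measurable_hsTerm (x : ℝ) : Measurable (hsTerm x) :=
  Measurable.ite (measurableSet_singleton ⊤) measurable_const <|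
    Measurable.ite (measurableSet_singleton ⊥) measurable_const <|
      measurable_const.max <| measurable_const.sub <| measurable_const.mul
        measurable_ereal_toReal.neg.exp

lemma hsTerm_coe_log_div (x : ℝ) {a b : ℝ} (ha : 0 < a) (hb : 0 < b) :
    hsTerm x (Real.log (a / b) : ℝ) = max 0 (1 - x * (b / a)) := by
  rw [hsTerm, if_neg (EReal.coe_ne_top _), if_neg (EReal.coe_ne_bot _), EReal.toReal_coe,
    ← Real.log_inv, inv_div, Real.exp_log (div_pos hb ha)]

lemma toReal_mul_hsTerm_ite {x : ℝ} (hx : 0 ≤ x) {a b : ℝ≥0∞} (ha : a ≠ ∞) (hb : b ≠ ∞) :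
    a.toReal * hsTerm x (if b = 0 then ⊤ else if a = 0 then ⊥
        else ((Real.log (a.toReal / b.toReal) : ℝ) : EReal)) =
      max 0 (a.toReal - x * b.toReal) := by
  by_cases hb0 : b = 0
  · simp [hb0, hsTerm]
  by_cases ha0 : a = 0
  · simpa [ha0, hb0, hsTerm] using mul_nonneg hx ENNReal.toReal_nonneg
  have ha' : 0 < a.toReal := ENNReal.toReal_pos ha0 ha
  have hb' : 0 < b.toReal := ENNReal.toReal_pos hb0 hb
  rw [if_neg hb0, if_neg ha0, hsTerm_coe_log_div x ha' hb', mul_max_of_nonneg _ _ ha'.le,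
    mul_zero, mul_sub, mul_one, mul_left_comm, mul_div_cancel₀ _ ha'.ne']

lemma integral_hsTerm_pld {x : ℝ} (hx : 0 ≤ x) (P Q : Measure Ω) [SigmaFinite P]
    [SigmaFinite Q] :
    ∫ z, hsTerm x z ∂(pld P Q) = ∫ ω, max 0 ((P.rnDeriv (P + Q) ω).toReal -
      x * (Q.rnDeriv (P + Q) ω).toReal) ∂(P + Q) := by
  rw [pld, integral_map (measurable_privacyLoss P Q).aemeasurable
    (measurable_hsTerm x).aestronglyMeasurable,
    ← integral_rnDeriv_smul (Measure.AbsolutelyContinuous.rfl.add_right Q)]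
  refine integral_congr_ae ?_
  filter_upwards [Measure.rnDeriv_lt_top P (P + Q), Measure.rnDeriv_lt_top Q (P + Q)]
    with ω hp hq
  exact toReal_mul_hsTerm_ite hx hp.ne hq.ne

end PrivacyLoss

/-- `H_x(P‖Q) = E_{Z ∼ PLD(P‖Q)}[max (0, 1 - x e^{-Z})]` for probability measures `P, Q`
and `x > 0`. -/
theorem stmt1 {Ω : Type*} [MeasurableSpace Ω] (P Q : Measure Ω)
    [IsProbabilityMeasure P] [IsProbabilityMeasure Q] (x : ℝ) (hx : 0 < x) :
    hsDiv x P Q = ∫ z, hsTerm x z ∂(pld P Q) := by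
  rw [integral_hsTerm_pld hx.le, hsDiv_eq_integral_max_zero_rnDeriv
    (Measure.AbsolutelyContinuous.rfl.add_right Q) (Measure.AbsolutelyContinuous.rfl.add_right' P)]
end

section
/- A function h : (0,∞) → [0,1] is the hockey-stick curve x ↦ H_x(P‖Q) of some pair of probability distributions (P,Q) if and only if h is convex, decreasing, satisfies lim_{x→0} h(x) = 1, and h(x) ≥ 1 − x for all x > 0. -/
open MeasureTheory Filter Set
open scoped ENNReal NNReal

/-!
Necessity: `x ↦ H_x(P‖Q)` is a supremum of the affine maps `x ↦ P(E) - x Q(E)`, and the choices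
`E = ∅` and `E = Ω` give the lower bounds `0` and `1 - x`.

Sufficiency: the right derivative `h'₊` of `h` is nondecreasing, right-continuous, takes values
in `[-1, 0]` and tends to `0` at infinity, so `-h'₊(t)` is the tail `Q(t, ∞)` of a probability
measure `Q` on `[0, ∞)`. With `s = lim_{x → ∞} h x`, let `P = ω • Q + s δ₋₁`, so that `dP/dQ = ω`
off the atom. Then `H_x(P‖Q) = ∫ (ω - x)⁺ dQ + s = ∫_x^∞ Q(t, ∞) dt + s = h x` by the layer cake
formula and the fundamental theorem of calculus; at `x = 0` the same computation gives `P(ℝ) = 1`.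
-/

open scoped Topology

section Curve

variable {Ω : Type*} [MeasurableSpace Ω] (P Q : Measure Ω) [IsProbabilityMeasure P]

lemma toReal_sub_mul_toReal_le_one {x : ℝ} (hx : 0 ≤ x) (E : Set Ω) :
    (P E).toReal - x * (Q E).toReal ≤ 1 := by
  have hP : (P E).toReal ≤ 1 := measureReal_le_one
  have hQ : 0 ≤ x * (Q E).toReal := by positivity
  linarith

lemma hsDiv_le_one {x : ℝ} (hx : 0 ≤ x) : hsDiv x P Q ≤ 1 :=
  ciSup_le fun E => toReal_sub_mul_toReal_le_one P Q hx E

lemma le_hsDiv {x : ℝ} (hx : 0 ≤ x) {E : Set Ω} (hE : MeasurableSet E) :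
    (P E).toReal - x * (Q E).toReal ≤ hsDiv x P Q :=
  le_ciSup (f := fun E : {E : Set Ω // MeasurableSet E} => (P E).toReal - x * (Q E).toReal)
    ⟨1, by rintro _ ⟨E, rfl⟩; exact toReal_sub_mul_toReal_le_one P Q hx E⟩ ⟨E, hE⟩

lemma hsDiv_nonneg {x : ℝ} (hx : 0 ≤ x) : 0 ≤ hsDiv x P Q := by
  simpa using le_hsDiv P Q hx MeasurableSet.empty

lemma antitoneOn_hsDiv : AntitoneOn (fun x => hsDiv x P Q) (Ici 0) := by
  intro x hx y _ hxy
  refine ciSup_le fun E => (le_hsDiv P Q hx E.2).trans' ?_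
  have : 0 ≤ (Q E).toReal := ENNReal.toReal_nonneg
  nlinarith

lemma convexOn_hsDiv : ConvexOn ℝ (Ici 0) (fun x => hsDiv x P Q) := by
  refine ⟨convex_Ici 0, fun x hx y hy a b ha hb hab => ciSup_le fun E => ?_⟩
  calc (P E).toReal - (a • x + b • y) * (Q E).toReal
      = a * ((P E).toReal - x * (Q E).toReal) + b * ((P E).toReal - y * (Q E).toReal) := by
        rw [smul_eq_mul, smul_eq_mul]; linear_combination (P E).toReal * hab.symm
    _ ≤ a • hsDiv x P Q + b • hsDiv y P Q :=
        add_le_add (mul_le_mul_of_nonneg_left (le_hsDiv P Q hx E.2) ha)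
          (mul_le_mul_of_nonneg_left (le_hsDiv P Q hy E.2) hb)

variable [IsProbabilityMeasure Q]

lemma one_sub_le_hsDiv {x : ℝ} (hx : 0 ≤ x) : 1 - x ≤ hsDiv x P Q := by
  simpa using le_hsDiv P Q hx MeasurableSet.univ

lemma tendsto_hsDiv_nhdsGT_zero : Tendsto (fun x => hsDiv x P Q) (𝓝[>] 0) (𝓝 1) := by
  have hlow : Tendsto (fun x : ℝ => 1 - x) (𝓝[>] 0) (𝓝 1) := by
    simpa using (tendsto_const_nhds.sub tendsto_id).mono_left (nhdsWithin_le_nhds (a := (0:ℝ)))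
  refine tendsto_of_tendsto_of_tendsto_of_le_of_le' hlow tendsto_const_nhds ?_ ?_ <;>
    filter_upwards [self_mem_nhdsWithin] with x (hx : 0 < x)
  exacts [one_sub_le_hsDiv P Q hx.le, hsDiv_le_one P Q hx.le]

end Curve

section WithDensity

variable {Ω : Type*} [MeasurableSpace Ω]

lemma hsDiv_eq_of_forall_le_of_eq {P Q : Measure Ω} [IsFiniteMeasure Q] {x v : ℝ} (hx : 0 ≤ x)
    (hv : 0 ≤ v) (hle : ∀ E, MeasurableSet E → P E ≤ ENNReal.ofReal v + ENNReal.ofReal x * Q E)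
    {E₀ : Set Ω} (hE₀ : MeasurableSet E₀)
    (heq : P E₀ = ENNReal.ofReal v + ENNReal.ofReal x * Q E₀) :
    hsDiv x P Q = v := by
  have htoReal (E : Set Ω) :
      (ENNReal.ofReal v + ENNReal.ofReal x * Q E).toReal = v + x * (Q E).toReal := by
    rw [ENNReal.toReal_add (by finiteness) (by finiteness), ENNReal.toReal_mul,
      ENNReal.toReal_ofReal hv, ENNReal.toReal_ofReal hx]
  have hbound (E : {E : Set Ω // MeasurableSet E}) : (P E).toReal - x * (Q E).toReal ≤ v := by
    have := ENNReal.toReal_mono (by finiteness) (hle E E.2)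
    rw [htoReal] at this
    linarith
  refine le_antisymm (ciSup_le hbound) (le_ciSup_of_le ⟨v, forall_mem_range.2 hbound⟩ ⟨E₀, hE₀⟩ ?_)
  simp [heq, htoReal]

lemma withDensity_add_smul_dirac_apply (Q : Measure Ω) (g : Ω → ℝ≥0∞) (c : ℝ≥0∞) (a : Ω)
    {E : Set Ω} (hE : MeasurableSet E) :
    (Q.withDensity g + c • Measure.dirac a) E = ∫⁻ ω in E, g ω ∂Q + c * E.indicator 1 a := by
  rw [Measure.add_apply, withDensity_apply _ hE, Measure.smul_apply,
    Measure.dirac_apply' _ hE, smul_eq_mul]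

lemma setLIntegral_ofReal_le_ofReal_sub_add (Q : Measure Ω) (L : Ω → ℝ) {x : ℝ} (hx : 0 ≤ x)
    (E : Set Ω) :
    ∫⁻ ω in E, ENNReal.ofReal (L ω) ∂Q ≤
      ∫⁻ ω in E, ENNReal.ofReal (L ω - x) ∂Q + ENNReal.ofReal x * Q E := by
  rw [← setLIntegral_const, ← lintegral_add_right _ measurable_const]
  refine lintegral_mono fun ω => ?_
  rw [ENNReal.ofReal_sub _ hx]
  exact le_tsub_add

lemma hsDiv_withDensity_add_smul_dirac [MeasurableSingletonClass Ω] (Q : Measure Ω)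
    [IsFiniteMeasure Q] {L : Ω → ℝ} (hL : Measurable L)
    (hLint : ∫⁻ ω, ENNReal.ofReal (L ω) ∂Q ≠ ∞) {a : Ω} (ha : Q {a} = 0) {c x : ℝ} (hc : 0 ≤ c)
    (hx : 0 ≤ x) :
    hsDiv x (Q.withDensity (fun ω => ENNReal.ofReal (L ω)) + ENNReal.ofReal c • Measure.dirac a) Q =
      (∫⁻ ω, ENNReal.ofReal (L ω - x) ∂Q).toReal + c := by
  set I := ∫⁻ ω, ENNReal.ofReal (L ω - x) ∂Q
  have hI : I ≠ ∞ := ne_top_of_le_ne_top hLint (lintegral_mono fun ω =>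
    ENNReal.ofReal_le_ofReal (by linarith))
  have hv : ENNReal.ofReal (I.toReal + c) = I + ENNReal.ofReal c := by
    rw [ENNReal.ofReal_add ENNReal.toReal_nonneg hc, ENNReal.ofReal_toReal hI]
  set B := {ω | x < L ω}
  have hB : MeasurableSet B := measurableSet_lt measurable_const hL
  have hBa : (B ∪ {a} : Set Ω) =ᵐ[Q] B := by
    simpa using (ae_eq_refl B).union (ae_eq_empty.2 ha)
  refine hsDiv_eq_of_forall_le_of_eq (E₀ := B ∪ {a}) hx (by positivity) (fun E hE => ?_)
    (hB.union (measurableSet_singleton a)) ?_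
  · have hind : E.indicator 1 a ≤ (1 : ℝ≥0∞) := by by_cases haE : a ∈ E <;> simp [haE]
    rw [withDensity_add_smul_dirac_apply _ _ _ _ hE]
    calc ∫⁻ ω in E, ENNReal.ofReal (L ω) ∂Q + ENNReal.ofReal c * E.indicator 1 a
        ≤ (∫⁻ ω in E, ENNReal.ofReal (L ω - x) ∂Q + ENNReal.ofReal x * Q E) + ENNReal.ofReal c :=
          add_le_add (setLIntegral_ofReal_le_ofReal_sub_add Q L hx E)
            (mul_le_of_le_one_right' hind)
      _ ≤ (I + ENNReal.ofReal x * Q E) + ENNReal.ofReal c := by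
          gcongr; exact setLIntegral_le_lintegral _ _
      _ = ENNReal.ofReal (I.toReal + c) + ENNReal.ofReal x * Q E := by rw [hv]; ring
  · have hI_B : ∫⁻ ω in B, ENNReal.ofReal (L ω - x) ∂Q = I :=
      setLIntegral_eq_of_support_subset fun ω hω => by simpa [B, sub_pos] using hω
    have hL_B : ∫⁻ ω in B, ENNReal.ofReal (L ω) ∂Q = I + ENNReal.ofReal x * Q B := by
      rw [← hI_B, ← setLIntegral_const, ← lintegral_add_right _ measurable_const]
      refine setLIntegral_congr_fun hB fun ω (hω : x < L ω) => ?_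
      rw [← ENNReal.ofReal_add (by linarith) hx, sub_add_cancel]
    rw [withDensity_add_smul_dirac_apply _ _ _ _ (hB.union (measurableSet_singleton a)),
      setLIntegral_congr hBa, measure_congr hBa, hL_B, hv]
    simp only [mem_union, mem_singleton_iff, or_true, indicator_of_mem, Pi.one_apply, mul_one]
    ring

end WithDensity

namespace ConvexOn

variable {S : Set ℝ} {f : ℝ → ℝ} {x y : ℝ}

lemma slope_le_rightDeriv_of_mem_interior (hfc : ConvexOn ℝ S f) (hy : y ∈ S)
    (hx : x ∈ interior S) (hyx : y < x) : slope f y x ≤ derivWithin f (Ioi x) x :=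
  (hfc.slope_le_leftDeriv_of_mem_interior hy hx hyx).trans
    (hfc.leftDeriv_le_rightDeriv_of_mem_interior hx)

lemma continuousWithinAt_rightDeriv (hfc : ConvexOn ℝ S f) (hx : x ∈ interior S) :
    ContinuousWithinAt (fun y => derivWithin f (Ioi y) y) (Ici x) x := by
  have hS : interior S ∈ 𝓝[≥] x := mem_nhdsWithin_of_mem_nhds (isOpen_interior.mem_nhds hx)
  refine tendsto_order.2 ⟨fun a ha => ?_, fun a ha => ?_⟩
  · filter_upwards [hS, self_mem_nhdsWithin] with y hyS (hxy : x ≤ y)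
    exact ha.trans_le (hfc.monotoneOn_rightDeriv hx hyS hxy)
  have hslope : ∀ᶠ z in 𝓝[>] x, slope f x z < a :=
    ((hasDerivWithinAt_iff_tendsto_slope' self_notMem_Ioi).1
      (hfc.hasDerivWithinAt_rightDeriv_of_mem_interior hx)).eventually (gt_mem_nhds ha)
  have hzS : ∀ᶠ z in 𝓝[>] x, z ∈ interior S :=
    mem_nhdsWithin_of_mem_nhds (isOpen_interior.mem_nhds hx)
  obtain ⟨z, hza, hzS, hxz⟩ := (hslope.and (hzS.and self_mem_nhdsWithin)).exists
  have hcont : ContinuousWithinAt (fun y => slope f y z) (Ici x) x := by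
    simp_rw [slope_def_field]
    exact ((continuousAt_const.sub ((hfc.continuousOn_interior).continuousAt
      (isOpen_interior.mem_nhds hx))).div (continuousAt_const.sub continuousAt_id)
      (sub_ne_zero.2 hxz.ne')).continuousWithinAt
  filter_upwards [hS, hcont.eventually (gt_mem_nhds hza),
    mem_nhdsWithin_of_mem_nhds (gt_mem_nhds hxz)] with y hyS hyz hyz'
  exact (hfc.rightDeriv_le_slope_of_mem_interior hyS (interior_subset hzS) hyz').trans_lt hyz

end ConvexOn

lemma lintegral_Ioi_ofReal_neg_eq_sub {f f' : ℝ → ℝ} {a l : ℝ} (hf : ContinuousOn f (Ici a))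
    (hderiv : ∀ t ∈ Ioi a, HasDerivWithinAt f (f' t) (Ioi t) t)
    (hf'_int : ∀ b, IntervalIntegrable f' volume a b) (hf'_nonpos : ∀ t ∈ Ioi a, f' t ≤ 0)
    (hlim : Tendsto f atTop (𝓝 l)) :
    ∫⁻ t in Ioi a, ENNReal.ofReal (-f' t) = ENNReal.ofReal (f a - l) := by
  have hcover : AECover (volume.restrict (Ioi a)) atTop (fun b : ℝ => Iic b) :=
    aecover_Iic tendsto_id
  have hrestrict (b : ℝ) :
      (volume.restrict (Ioi a)).restrict (Iic b) = volume.restrict (Ioc a b) := by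
    rw [Measure.restrict_restrict measurableSet_Iic, Iic_inter_Ioi]
  refine hcover.lintegral_eq_of_tendsto _ (hcover.aemeasurable fun b => ?_) ?_
  · rw [hrestrict]
    exact ((hf'_int b).1.aestronglyMeasurable.aemeasurable.neg).ennreal_ofReal
  refine (ENNReal.tendsto_ofReal (tendsto_const_nhds.sub hlim)).congr' ?_
  filter_upwards [eventually_ge_atTop a] with b hab
  have hftc : ∫ t in a..b, f' t = f b - f a :=
    intervalIntegral.integral_eq_sub_of_hasDeriv_right_of_le hab (hf.mono Icc_subset_Ici_self)
      (fun t ht => hderiv t ht.1) (hf'_int b)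
  rw [hrestrict, ← ofReal_integral_eq_lintegral_ofReal (f := fun t => -f' t) (hf'_int b).1.neg
    ((ae_restrict_mem measurableSet_Ioc).mono fun t ht => neg_nonneg.2 (hf'_nonpos t ht.1)),
    integral_neg, ← intervalIntegral.integral_of_le hab, hftc, neg_sub]

lemma lintegral_ofReal_sub_eq_lintegral_measure_Ioi (Q : Measure ℝ) (x : ℝ) :
    ∫⁻ ω, ENNReal.ofReal (ω - x) ∂Q = ∫⁻ r in Ioi x, Q (Ioi r) := by
  have hcake := lintegral_eq_lintegral_meas_lt Q (f := fun ω => max (ω - x) 0)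
    (ae_of_all _ fun _ => le_max_right _ _) (by fun_prop)
  simp only [ENNReal.ofReal_max, ENNReal.ofReal_zero, max_zero] at hcake
  rw [hcake, ← (measurePreserving_add_right volume x).setLIntegral_comp_preimage_emb
    (measurableEmbedding_addRight x) (fun r => Q (Ioi r)) (Ioi x), preimage_add_const_Ioi, sub_self]
  refine setLIntegral_congr_fun measurableSet_Ioi fun r (hr : 0 < r) => ?_
  congr 1
  ext ω
  simp [hr.not_gt, lt_sub_iff_add_lt, add_comm]

lemma lintegral_ofReal_sub_eq_of_hasDerivWithinAt (Q : Measure ℝ) [IsFiniteMeasure Q]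
    {g : ℝ → ℝ} {x l : ℝ} (hg : ContinuousOn g (Ici x))
    (hderiv : ∀ t ∈ Ioi x, HasDerivWithinAt g (-(Q (Ioi t)).toReal) (Ioi t) t)
    (hlim : Tendsto g atTop (𝓝 l)) :
    ∫⁻ ω, ENNReal.ofReal (ω - x) ∂Q = ENNReal.ofReal (g x - l) := by
  have htail : Monotone fun t => -(Q (Ioi t)).toReal := fun t t' htt' =>
    neg_le_neg (ENNReal.toReal_mono (measure_ne_top Q _) (measure_mono (Ioi_subset_Ioi htt')))
  rw [lintegral_ofReal_sub_eq_lintegral_measure_Ioi, ← lintegral_Ioi_ofReal_neg_eq_sub hg hderiv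
    (fun _ => htail.intervalIntegrable) (fun _ _ => neg_nonpos.2 ENNReal.toReal_nonneg) hlim]
  simp_rw [neg_neg, ENNReal.ofReal_toReal (measure_ne_top Q _)]

lemma exists_isProbabilityMeasure_measure_Ioi_eq {m : ℝ → ℝ} (hm_anti : AntitoneOn m (Ioi 0))
    (hm_le : ∀ t > 0, m t ≤ 1) (hm_cont : ∀ t > 0, ContinuousWithinAt m (Ici t) t)
    (hm_lim : Tendsto m atTop (𝓝 0)) :
    ∃ Q : Measure ℝ, IsProbabilityMeasure Q ∧ Q (Iio 0) = 0 ∧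
      ∀ t > 0, Q (Ioi t) = ENNReal.ofReal (m t) := by
  let φ : ℝ → ℝ := fun t => if 0 < t then 1 - m t else 0
  have hφ_pos {t : ℝ} (ht : 0 < t) : φ t = 1 - m t := if_pos ht
  have hφ_nonpos {t : ℝ} (ht : t ≤ 0) : φ t = 0 := if_neg ht.not_gt
  have hφ : Monotone φ := by
    intro a b hab
    rcases le_or_gt a 0 with ha | ha
    · rcases le_or_gt b 0 with hb | hb
      · rw [hφ_nonpos ha, hφ_nonpos hb]
      · rw [hφ_nonpos ha, hφ_pos hb]; linarith [hm_le b hb]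
    · rw [hφ_pos ha, hφ_pos (ha.trans_le hab)]
      linarith [hm_anti ha (ha.trans_le hab) hab]
  set F := hφ.stieltjesFunction
  have hF_pos {t : ℝ} (ht : 0 < t) : F t = 1 - m t := by
    have hcont : ContinuousWithinAt φ (Ioi t) t :=
      (continuousWithinAt_const.sub ((hm_cont t ht).mono Ioi_subset_Ici_self)).congr
        (fun u (hu : t < u) => hφ_pos (ht.trans hu)) (hφ_pos ht)
    rw [hφ.stieltjesFunction_eq, hφ.continuousWithinAt_Ioi_iff_rightLim_eq.1 hcont, hφ_pos ht]
  have hF_neg {t : ℝ} (ht : t < 0) : F t = 0 := le_antisymm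
    ((hφ.rightLim_le (by linarith : t < t / 2)).trans_eq (hφ_nonpos (by linarith)))
    ((hφ_nonpos ht.le).symm.trans_le (hφ.le_rightLim le_rfl))
  have hF_top : Tendsto F atTop (𝓝 1) := by
    simpa using (tendsto_const_nhds.sub hm_lim).congr'
      ((eventually_gt_atTop 0).mono fun t ht => (hF_pos ht).symm)
  have hF_bot : Tendsto F atBot (𝓝 0) :=
    tendsto_const_nhds.congr' ((eventually_lt_atBot 0).mono fun t ht => (hF_neg ht).symm)
  refine ⟨F.measure, F.isProbabilityMeasure hF_bot hF_top, ?_, fun t ht => ?_⟩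
  · rw [F.measure_Iio hF_bot, leftLim_eq_of_tendsto (y := 0), sub_zero, ENNReal.ofReal_zero]
    exact tendsto_const_nhds.congr' (eventually_nhdsWithin_of_forall fun t ht => (hF_neg ht).symm)
  · rw [F.measure_Ioi hF_top, hF_pos ht, sub_sub_cancel]

section Realization

variable {h : ℝ → ℝ}

lemma rightDeriv_nonpos (hcvx : ConvexOn ℝ (Ioi 0) h) (hant : AntitoneOn h (Ioi 0)) {t : ℝ}
    (ht : 0 < t) : derivWithin h (Ioi t) t ≤ 0 := by
  have ht' : 0 < t + 1 := by linarith
  refine (hcvx.rightDeriv_le_slope_of_mem_interior (by rwa [interior_Ioi]) ht'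
    (lt_add_one t)).trans ?_
  rw [slope_def_field]
  exact div_nonpos_of_nonpos_of_nonneg (sub_nonpos.2 (hant ht ht' (by linarith))) (by linarith)

lemma neg_one_le_rightDeriv (hcvx : ConvexOn ℝ (Ioi 0) h) (hlim : Tendsto h (𝓝[>] 0) (𝓝 1))
    (hge : ∀ x > 0, 1 - x ≤ h x) {t : ℝ} (ht : 0 < t) : -1 ≤ derivWithin h (Ioi t) t := by
  have hslope : Tendsto (fun y => slope h y t) (𝓝[>] 0) (𝓝 ((h t - 1) / (t - 0))) := by
    simp_rw [slope_def_field]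
    exact (tendsto_const_nhds.sub hlim).div
      (tendsto_const_nhds.sub (tendsto_id.mono_left nhdsWithin_le_nhds)) (by simpa using ht.ne')
  have hle : (h t - 1) / (t - 0) ≤ derivWithin h (Ioi t) t := by
    refine le_of_tendsto hslope ?_
    filter_upwards [Ioo_mem_nhdsGT ht] with y hy
    exact hcvx.slope_le_rightDeriv_of_mem_interior hy.1 (by rwa [interior_Ioi]) hy.2
  have hslope_ge : -1 ≤ (h t - 1) / (t - 0) := by
    rw [sub_zero, le_div_iff₀ ht]; linarith [hge t ht]
  exact hslope_ge.trans hle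

lemma tendsto_rightDeriv_atTop (hcvx : ConvexOn ℝ (Ioi 0) h) (hant : AntitoneOn h (Ioi 0))
    (hrange : ∀ x > 0, h x ∈ Icc (0 : ℝ) 1) :
    Tendsto (fun t => derivWithin h (Ioi t) t) atTop (𝓝 0) := by
  refine tendsto_of_tendsto_of_tendsto_of_le_of_le'
    ((tendsto_const_nhds (x := (-2 : ℝ))).div_atTop tendsto_id) tendsto_const_nhds ?_
    ((eventually_gt_atTop 0).mono fun t ht => rightDeriv_nonpos hcvx hant ht)
  filter_upwards [eventually_gt_atTop 0] with t ht
  have ht2 : 0 < t / 2 := half_pos ht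
  calc -2 / t = (0 - 1) / (t - t / 2) := by field_simp; ring
    _ ≤ slope h (t / 2) t := by
        rw [slope_def_field]
        gcongr <;> linarith [(hrange t ht).1, (hrange _ ht2).2]
    _ ≤ derivWithin h (Ioi t) t :=
        hcvx.slope_le_rightDeriv_of_mem_interior ht2 (by rwa [interior_Ioi]) (half_lt_self ht)

lemma AntitoneOn.exists_tendsto_atTop (hant : AntitoneOn h (Ioi 0)) (hnonneg : ∀ x > 0, 0 ≤ h x) :
    ∃ s, Tendsto h atTop (𝓝 s) := by
  have hpos (t : ℝ) : (0 : ℝ) < max t 1 := lt_max_of_lt_right one_pos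
  have hanti : Antitone fun t => h (max t 1) := fun a b hab =>
    hant (hpos a) (hpos b) (max_le_max hab le_rfl)
  exact ⟨_, (tendsto_atTop_ciInf hanti ⟨0, forall_mem_range.2 fun t => hnonneg _ (hpos t)⟩).congr'
    ((eventually_ge_atTop 1).mono fun t ht => by simp only [max_eq_left ht])⟩

lemma continuousOn_update_zero (hcvx : ConvexOn ℝ (Ioi 0) h)
    (hlim : Tendsto h (𝓝[>] 0) (𝓝 1)) : ContinuousOn (Function.update h 0 1) (Ici 0) := by
  intro t ht
  rcases (mem_Ici.1 ht).eq_or_lt with rfl | ht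
  · rwa [continuousWithinAt_update_same, Ici_sdiff_left]
  · rw [continuousWithinAt_update_of_ne ht.ne']
    exact (hcvx.continuousOn_interior.continuousAt
      (by rw [interior_Ioi]; exact isOpen_Ioi.mem_nhds ht)).continuousWithinAt

lemma lintegral_ofReal_sub_eq_update_sub (hcvx : ConvexOn ℝ (Ioi 0) h)
    (hant : AntitoneOn h (Ioi 0)) (hlim : Tendsto h (𝓝[>] 0) (𝓝 1)) {Q : Measure ℝ}
    [IsFiniteMeasure Q] (hQ : ∀ t > 0, Q (Ioi t) = ENNReal.ofReal (-derivWithin h (Ioi t) t))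
    {s : ℝ} (hs : Tendsto h atTop (𝓝 s)) {x : ℝ} (hx : 0 ≤ x) :
    ∫⁻ ω, ENNReal.ofReal (ω - x) ∂Q = ENNReal.ofReal (Function.update h 0 1 x - s) := by
  have hupdate {t : ℝ} (ht : 0 < t) : Function.update h 0 1 t = h t :=
    Function.update_of_ne ht.ne' _ _
  refine lintegral_ofReal_sub_eq_of_hasDerivWithinAt Q
    ((continuousOn_update_zero hcvx hlim).mono (Ici_subset_Ici.2 hx)) (fun t ht => ?_)
    (hs.congr' ((eventually_gt_atTop 0).mono fun t ht => (hupdate ht).symm))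
  have ht : 0 < t := hx.trans_lt ht
  rw [hQ t ht, ENNReal.toReal_ofReal (neg_nonneg.2 (rightDeriv_nonpos hcvx hant ht)), neg_neg]
  exact (hcvx.hasDerivWithinAt_rightDeriv_of_mem_interior (by rwa [interior_Ioi])).congr
    (fun y (hy : t < y) => hupdate (ht.trans hy)) (hupdate ht)

theorem exists_isProbabilityMeasure_hsDiv_eq (hcvx : ConvexOn ℝ (Ioi 0) h)
    (hant : AntitoneOn h (Ioi 0)) (hlim : Tendsto h (𝓝[>] 0) (𝓝 1))
    (hbnd : ∀ x > 0, h x ∈ Icc (0 : ℝ) 1 ∧ 1 - x ≤ h x) :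
    ∃ P Q : Measure ℝ, IsProbabilityMeasure P ∧ IsProbabilityMeasure Q ∧
      ∀ x > 0, hsDiv x P Q = h x := by
  have hint {t : ℝ} (ht : 0 < t) : t ∈ interior (Ioi (0 : ℝ)) := by rwa [interior_Ioi]
  obtain ⟨Q, hQ, hQ_neg, hQ_Ioi⟩ :=
    exists_isProbabilityMeasure_measure_Ioi_eq (m := fun t => -derivWithin h (Ioi t) t)
      (fun a ha b hb hab => neg_le_neg (hcvx.monotoneOn_rightDeriv (hint ha) (hint hb) hab))
      (fun t ht => by linarith [neg_one_le_rightDeriv hcvx hlim (fun x hx => (hbnd x hx).2) ht])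
      (fun t ht => (hcvx.continuousWithinAt_rightDeriv (hint ht)).neg)
      (by simpa using (tendsto_rightDeriv_atTop hcvx hant fun x hx => (hbnd x hx).1).neg)
  obtain ⟨s, hs⟩ := hant.exists_tendsto_atTop fun x hx => (hbnd x hx).1.1
  have hs_le {x : ℝ} (hx : 0 < x) : s ≤ h x :=
    le_of_tendsto hs ((eventually_ge_atTop x).mono fun t ht => hant hx (hx.trans_le ht) ht)
  have hs_nonneg : 0 ≤ s :=
    ge_of_tendsto hs ((eventually_gt_atTop 0).mono fun t ht => (hbnd t ht).1.1)
  have hcake {x : ℝ} (hx : 0 ≤ x) := lintegral_ofReal_sub_eq_update_sub hcvx hant hlim hQ_Ioi hs hx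
  have hmean : ∫⁻ ω, ENNReal.ofReal ω ∂Q = ENNReal.ofReal (1 - s) := by
    simpa using hcake le_rfl
  refine ⟨Q.withDensity (fun ω => ENNReal.ofReal ω) + ENNReal.ofReal s • Measure.dirac (-1), Q,
    ⟨?_⟩, hQ, fun x hx => ?_⟩
  · rw [withDensity_add_smul_dirac_apply _ _ _ _ MeasurableSet.univ, Measure.restrict_univ, hmean,
      indicator_of_mem (mem_univ _), Pi.one_apply, mul_one, ← ENNReal.ofReal_add (by linarith [hs_le one_pos, (hbnd 1 one_pos).1.2]) hs_nonneg,
      sub_add_cancel, ENNReal.ofReal_one]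
  · rw [hsDiv_withDensity_add_smul_dirac Q measurable_id'
      (by rw [hmean]; exact ENNReal.ofReal_ne_top)
      (measure_mono_null (by simp : {(-1 : ℝ)} ⊆ Iio 0) hQ_neg) hs_nonneg hx.le, hcake hx.le,
      Function.update_of_ne hx.ne', ENNReal.toReal_ofReal (sub_nonneg.2 (hs_le hx)), sub_add_cancel]

end Realization

/-- A function `h` on `(0, ∞)` is the hockey-stick curve `x ↦ H_x(P‖Q)` of some pair of
probability distributions iff it is convex, decreasing, tends to `1` at `0⁺`, takes values
in `[0,1]`, and satisfies `h x ≥ 1 - x`. -/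
theorem stmt2 (h : ℝ → ℝ) :
    (∃ (Ω : Type) (_ : MeasurableSpace Ω) (P Q : Measure Ω),
        IsProbabilityMeasure P ∧ IsProbabilityMeasure Q ∧ ∀ x > 0, h x = hsDiv x P Q) ↔
      (ConvexOn ℝ (Set.Ioi 0) h ∧ AntitoneOn h (Set.Ioi 0) ∧
        Tendsto h (nhdsWithin 0 (Set.Ioi 0)) (nhds 1) ∧
        ∀ x > 0, h x ∈ Set.Icc (0 : ℝ) 1 ∧ 1 - x ≤ h x) := by
  constructor
  · rintro ⟨Ω, _, P, Q, hP, hQ, hPQ⟩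
    have heq : EqOn (fun x => hsDiv x P Q) h (Ioi 0) := fun x hx => (hPQ x hx).symm
    refine ⟨((convexOn_hsDiv P Q).subset Ioi_subset_Ici_self (convex_Ioi 0)).congr heq,
      ((antitoneOn_hsDiv P Q).mono Ioi_subset_Ici_self).congr heq,
      (tendsto_hsDiv_nhdsGT_zero P Q).congr' (eventually_nhdsWithin_of_forall heq),
      fun x hx => ?_⟩
    rw [hPQ x hx]
    exact ⟨⟨hsDiv_nonneg P Q hx.le, hsDiv_le_one P Q hx.le⟩, one_sub_le_hsDiv P Q hx.le⟩
  · rintro ⟨hcvx, hant, hlim, hbnd⟩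
    obtain ⟨P, Q, hP, hQ, hPQ⟩ := exists_isProbabilityMeasure_hsDiv_eq hcvx hant hlim hbnd
    exact ⟨ℝ, inferInstance, P, Q, hP, hQ, fun x hx => (hPQ x hx).symm⟩
end

section
/- Let S, U₁, U₂ ⊆ (0,∞) with U₁ and U₂ open. Say S links T₁ and T₂ if there exists c > 0 with (c·S) ∩ T₁ ≠ ∅ and (c·S) ∩ T₂ ≠ ∅. Then S links U₁ and U₂ if and only if S links U₁ and the closure of U₂ (closure taken in (0,∞)). -/
open Set

/-- `S` (multiplicatively) links `T₁` and `T₂`: some dilate `c • S` (with `c > 0`)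
meets both `T₁` and `T₂`. -/
def Links (S T₁ T₂ : Set ℝ) : Prop :=
  ∃ c > (0 : ℝ), ((fun t => c * t) '' S ∩ T₁).Nonempty ∧ ((fun t => c * t) '' S ∩ T₂).Nonempty

/-- For `S, U₁, U₂ ⊆ (0,∞)` with `U₁, U₂` open: `S` links `U₁` and `U₂` iff `S` links
`U₁` and the closure of `U₂` taken in `(0,∞)`. -/
theorem stmt9 (S U₁ U₂ : Set ℝ)
    (hS : S ⊆ Set.Ioi 0) (hU₁s : U₁ ⊆ Set.Ioi 0) (hU₂s : U₂ ⊆ Set.Ioi 0)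
    (hU₁ : IsOpen U₁) (hU₂ : IsOpen U₂) :
    Links S U₁ U₂ ↔ Links S U₁ (closure U₂ ∩ Set.Ioi 0) := by
  constructor
  · rintro ⟨c, hc, h1, x, hx1, hx2⟩
    exact ⟨c, hc, h1, x, hx1, subset_closure hx2, hU₂s hx2⟩
  · rintro ⟨c, hc, ⟨y, ⟨s₁, hs₁S, rfl⟩, hy1⟩, x, ⟨s₂, hs₂S, rfl⟩, hx2, _⟩
    have hs₁ : (0:ℝ) < s₁ := hS hs₁S
    have hs₂ : (0:ℝ) < s₂ := hS hs₂S
    -- f u = u * s₁ / s₂ ; f (c*s₂) = c*s₁ ∈ U₁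
    have hf : Continuous (fun u : ℝ => u * s₁ / s₂) := by fun_prop
    have hmem : (fun u : ℝ => u * s₁ / s₂) (c * s₂) ∈ U₁ := by
      simp only
      have : c * s₂ * s₁ / s₂ = c * s₁ := by field_simp
      rw [this]
      exact hy1
    have hopen : IsOpen ((fun u : ℝ => u * s₁ / s₂) ⁻¹' U₁) := hU₁.preimage hf
    obtain ⟨u, huU₂, hupre⟩ : (U₂ ∩ (fun u : ℝ => u * s₁ / s₂) ⁻¹' U₁).Nonempty := by
      rw [inter_comm]
      exact mem_closure_iff.mp hx2 _ hopen hmem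
    have hu : (0:ℝ) < u := hU₂s huU₂
    refine ⟨u / s₂, div_pos hu hs₂, ⟨(u / s₂) * s₁, ⟨s₁, hs₁S, rfl⟩, ?_⟩,
      ⟨(u / s₂) * s₂, ⟨s₂, hs₂S, rfl⟩, ?_⟩⟩
    · have : (u / s₂) * s₁ = u * s₁ / s₂ := by ring
      rw [this]; exact hupre
    · rw [div_mul_cancel₀ _ hs₂.ne']; exact huU₂
end

section
/- Let S ⊆ (0,∞) contain at least two distinct points and let T be a closed subset of (0,∞) with ∅ ⊊ T ⊊ (0,∞). Suppose S does not link T and its complement, i.e., there is no c > 0 with (c·S) ∩ T ≠ ∅ and (c·S) ∩ ((0,∞)∖T) ≠ ∅. Then there exist a > 1 and B ⊆ [1, a) such that T = {aᵏ·b : k ∈ ℤ, b ∈ B}, and moreover a ≤ s'/s for all s, s' ∈ S with s < s'. -/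
open Set

private lemma exp_zpow_aux (x : ℝ) (k : ℤ) : Real.exp x ^ k = Real.exp (k * x) := by
  rw [← Real.rpow_intCast, Real.rpow_def_of_pos (Real.exp_pos x), Real.log_exp, mul_comm]

/-- If `S ⊆ (0,∞)` has at least two points and divides a nonempty proper subset
`T ⊆ (0,∞)` closed in `(0,∞)`, then `T = a^ℤ B` for some `a > 1` and `B ⊆ [1,a)`,
and moreover `a ≤ s'/s` for all `s < s'` in `S`. -/
theorem stmt10 (S T : Set ℝ) (hS : S ⊆ Set.Ioi 0) (hT : T ⊆ Set.Ioi 0)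
    (hS2 : ∃ s ∈ S, ∃ s' ∈ S, s ≠ s')
    (hTne : T.Nonempty) (hTproper : T ≠ Set.Ioi 0)
    (hTclosed : closure T ∩ Set.Ioi 0 ⊆ T)
    (hdiv : ¬ Links S T (Set.Ioi 0 \ T)) :
    ∃ a > (1 : ℝ), ∃ B ⊆ Set.Ico (1 : ℝ) a,
      T = {t : ℝ | ∃ k : ℤ, ∃ b ∈ B, t = a ^ k * b} ∧
      ∀ s ∈ S, ∀ s' ∈ S, s < s' → a ≤ s' / s := by
  -- key: multiplication by ratios of elements of S preserves T
  have key : ∀ s ∈ S, ∀ s' ∈ S, ∀ t ∈ T, s' / s * t ∈ T := by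
    intro s hs s' hs' t ht
    have hsp : (0:ℝ) < s := hS hs
    have hsp' : (0:ℝ) < s' := hS hs'
    have htp : (0:ℝ) < t := hT ht
    by_contra hcon
    apply hdiv
    refine ⟨t / s, by positivity, ⟨t, ⟨s, hs, by field_simp⟩, ht⟩,
      ⟨t / s * s', ⟨s', hs', rfl⟩, ⟨mem_Ioi.mpr (by positivity), ?_⟩⟩⟩
    have he : t / s * s' = s' / s * t := by ring
    rw [he]; exact hcon
  -- the additive subgroup of logarithms of dilations preserving T
  set H : AddSubgroup ℝ :=
    { carrier := {x | (∀ t ∈ T, Real.exp x * t ∈ T) ∧ (∀ t ∈ T, Real.exp (-x) * t ∈ T)}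
      zero_mem' := by simp
      add_mem' := by
        rintro x y ⟨hx1, hx2⟩ ⟨hy1, hy2⟩
        constructor
        · intro t ht
          have := hx1 _ (hy1 t ht)
          rwa [← mul_assoc, ← Real.exp_add] at this
        · intro t ht
          have := hx2 _ (hy2 t ht)
          rwa [← mul_assoc, ← Real.exp_add, ← neg_add] at this
      neg_mem' := by
        rintro x ⟨hx1, hx2⟩
        exact ⟨hx2, by rwa [neg_neg]⟩ } with hHdef
  have hmemH : ∀ s ∈ S, ∀ s' ∈ S, Real.log s' - Real.log s ∈ H := by
    intro s hs s' hs'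
    have hsp : (0:ℝ) < s := hS hs
    have hsp' : (0:ℝ) < s' := hS hs'
    have h1 : Real.exp (Real.log s' - Real.log s) = s' / s := by
      rw [Real.exp_sub, Real.exp_log hsp, Real.exp_log hsp']
    have h2 : Real.exp (-(Real.log s' - Real.log s)) = s / s' := by
      rw [neg_sub, Real.exp_sub, Real.exp_log hsp, Real.exp_log hsp']
    exact ⟨fun t ht => by rw [h1]; exact key s hs s' hs' t ht,
           fun t ht => by rw [h2]; exact key s' hs' s hs t ht⟩
  -- the subgroup is nontrivial
  obtain ⟨s₀, hs₀, s₁, hs₁, hne⟩ := hS2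
  have hr0 : Real.log s₁ - Real.log s₀ ≠ 0 := by
    intro h
    apply hne
    have := sub_eq_zero.mp h
    exact Real.log_injOn_pos (mem_Ioi.mpr (hS hs₀)) (mem_Ioi.mpr (hS hs₁)) this.symm
  rcases H.dense_or_cyclic with hdense | ⟨α, hα⟩
  · -- dense case: T = Ioi 0, contradiction
    exfalso
    apply hTproper
    apply Subset.antisymm hT
    obtain ⟨t0, ht0⟩ := hTne
    have ht0p : (0:ℝ) < t0 := hT ht0
    intro y hy
    have hyp : (0:ℝ) < y := hy
    apply hTclosed ⟨?_, hy⟩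
    have hmap : MapsTo (fun x => Real.exp x * t0) (H : Set ℝ) T := fun x hx => hx.1 t0 ht0
    have hcl := hmap.closure (by continuity)
    have hy' : Real.log (y / t0) ∈ closure (H : Set ℝ) := hdense.closure_eq ▸ mem_univ _
    have := hcl hy'
    simpa [Real.exp_log (show (0:ℝ) < y / t0 by positivity),
      div_mul_cancel₀ _ (ne_of_gt ht0p)] using this
  · -- cyclic case
    have hαne : α ≠ 0 := by
      rintro rfl
      have := hα ▸ hmemH s₀ hs₀ s₁ hs₁
      obtain ⟨n, hn⟩ := AddSubgroup.mem_closure_singleton.mp this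
      simp at hn
      exact hr0 hn.symm
    set β := |α| with hβ
    have hβpos : 0 < β := abs_pos.mpr hαne
    have hβH : β ∈ H := by
      rcases abs_choice α with h | h
      · rw [hβ, h, hα]; exact AddSubgroup.subset_closure rfl
      · rw [hβ, h, hα]; exact AddSubgroup.neg_mem _ (AddSubgroup.subset_closure rfl)
    set a := Real.exp β with ha
    have hapos : 0 < a := Real.exp_pos β
    have ha1 : 1 < a := by
      rw [ha, ← Real.exp_zero]; exact Real.exp_lt_exp.mpr hβpos
    -- powers of a preserve T
    have hpow : ∀ k : ℤ, ∀ t ∈ T, a ^ k * t ∈ T := by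
      intro k t ht
      have hk : (k : ℤ) • β ∈ H := AddSubgroup.zsmul_mem H hβH k
      have := hk.1 t ht
      rwa [zsmul_eq_mul, ← exp_zpow_aux] at this
    refine ⟨a, ha1, T ∩ Ico 1 a, inter_subset_right, ?_, ?_⟩
    · ext t
      constructor
      · intro ht
        have htp : (0:ℝ) < t := hT ht
        set k : ℤ := ⌊Real.log t / β⌋ with hk
        have h1 : (k : ℝ) * β ≤ Real.log t := by
          rw [← le_div_iff₀ hβpos]; exact Int.floor_le _
        have h2 : Real.log t < (k + 1 : ℝ) * β := by
          rw [← div_lt_iff₀ hβpos]; exact Int.lt_floor_add_one _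
        have hb : a ^ (-k) * t ∈ T := hpow (-k) t ht
        refine ⟨k, a ^ (-k) * t, ⟨hb, ?_, ?_⟩, ?_⟩
        · -- 1 ≤ a^(-k) * t
          rw [exp_zpow_aux]
          have : Real.exp ((k:ℝ) * β) ≤ t := by
            calc Real.exp ((k:ℝ) * β) ≤ Real.exp (Real.log t) := Real.exp_le_exp.mpr h1
            _ = t := Real.exp_log htp
          push_cast
          rw [neg_mul]
          calc (1:ℝ) = Real.exp (-((k:ℝ)*β) + (k:ℝ)*β) := by simp
          _ = Real.exp (-((k:ℝ)*β)) * Real.exp ((k:ℝ)*β) := Real.exp_add _ _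
          _ ≤ Real.exp (-((k:ℝ)*β)) * t :=
              mul_le_mul_of_nonneg_left this (Real.exp_pos _).le
        · -- a^(-k) * t < a
          rw [exp_zpow_aux]
          have ht' : t < Real.exp (((k:ℝ)+1) * β) := by
            calc t = Real.exp (Real.log t) := (Real.exp_log htp).symm
            _ < Real.exp (((k:ℝ)+1) * β) := Real.exp_lt_exp.mpr h2
          push_cast
          rw [neg_mul]
          calc Real.exp (-((k:ℝ)*β)) * t < Real.exp (-((k:ℝ)*β)) * Real.exp (((k:ℝ)+1)*β) := by
                exact mul_lt_mul_of_pos_left ht' (Real.exp_pos _)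
          _ = Real.exp β := by rw [← Real.exp_add]; ring_nf
          _ = a := rfl
        · rw [← mul_assoc, ← zpow_add₀ (ne_of_gt hapos)]
          simp
      · rintro ⟨k, b, ⟨hbT, _⟩, rfl⟩
        exact hpow k b hbT
    · -- a ≤ s'/s
      intro s hs s' hs' hss
      have hsp : (0:ℝ) < s := hS hs
      have hsp' : (0:ℝ) < s' := hS hs'
      have hlog : 0 < Real.log s' - Real.log s := sub_pos.mpr (Real.log_lt_log hsp hss)
      have hmem := hα ▸ hmemH s hs s' hs'
      obtain ⟨m, hm⟩ := AddSubgroup.mem_closure_singleton.mp hmem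
      rw [zsmul_eq_mul] at hm
      have hmne : m ≠ 0 := by
        rintro rfl; rw [← hm] at hlog; simp at hlog
      have hβle : β ≤ Real.log s' - Real.log s := by
        rw [← hm] at hlog ⊢
        have : (1:ℝ) ≤ |(m:ℝ)| := by
          have : (1:ℤ) ≤ |m| := Int.one_le_abs hmne
          calc (1:ℝ) = ((1:ℤ):ℝ) := by norm_num
          _ ≤ ((|m|:ℤ):ℝ) := by exact_mod_cast this
          _ = |(m:ℝ)| := by push_cast; rfl
        calc β = 1 * β := (one_mul β).symm
        _ ≤ |(m:ℝ)| * |α| := mul_le_mul_of_nonneg_right this (le_of_lt hβpos)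
        _ = |(m:ℝ) * α| := (abs_mul _ _).symm
        _ = (m:ℝ) * α := abs_of_pos hlog
      calc a = Real.exp β := rfl
      _ ≤ Real.exp (Real.log s' - Real.log s) := Real.exp_le_exp.mpr hβle
      _ = s' / s := by rw [Real.exp_sub, Real.exp_log hsp, Real.exp_log hsp']
end

section
/- If S ⊆ (0,∞) has at least two points and divides a nonempty proper closed subset T of (0,∞), then (s'/s)·T ⊆ T and (s/s')·T ⊆ T for all s, s' ∈ S; in particular, (s'/s)ᵏ·t ∈ T for all t ∈ T, s, s' ∈ S, and k ∈ ℤ. -/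
open Set

theorem div_mul_mem_of_not_links {S T : Set ℝ} (hS : S ⊆ Ioi 0) (hT : T ⊆ Ioi 0)
    (hdiv : ¬ Links S T (Ioi 0 \ T)) {s s' t : ℝ} (hs : s ∈ S) (hs' : s' ∈ S) (ht : t ∈ T) :
    s' / s * t ∈ T := by
  -- The dilate `(t / s) • S` meets `T` at `t = (t / s) s` and contains `(s' / s) t = (t / s) s'`.
  have hs_pos : 0 < s := hS hs
  have hc : 0 < t / s := div_pos (hT ht) hs_pos
  by_contra hmem
  refine hdiv ⟨t / s, hc, ⟨t, ⟨s, hs, div_mul_cancel₀ t hs_pos.ne'⟩, ht⟩, ⟨t / s * s', ⟨s', hs', rfl⟩, ?_⟩⟩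
  refine ⟨mul_pos hc (hS hs'), ?_⟩
  rwa [show t / s * s' = s' / s * t by ring]

theorem zpow_mul_mem_of_mul_mem {G₀ : Type*} [GroupWithZero G₀] {T : Set G₀} {a : G₀}
    (ha : a ≠ 0) (hmul : ∀ t ∈ T, a * t ∈ T) (hmul_inv : ∀ t ∈ T, a⁻¹ * t ∈ T) (k : ℤ) :
    ∀ t ∈ T, a ^ k * t ∈ T := by
  induction k using Int.induction_on with
  | zero => simp
  | succ n ih =>
    intro t ht
    rw [add_comm, zpow_one_add₀ ha, mul_assoc]
    exact hmul _ (ih t ht)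
  | pred n ih =>
    intro t ht
    rw [sub_eq_neg_add, zpow_add₀ ha, zpow_neg_one, mul_assoc]
    exact hmul_inv _ (ih t ht)

theorem stmt11_general (S T : Set ℝ) (hS : S ⊆ Set.Ioi 0) (hT : T ⊆ Set.Ioi 0)
    (hdiv : ¬ Links S T (Set.Ioi 0 \ T)) :
    (∀ s ∈ S, ∀ s' ∈ S, (fun t => (s' / s) * t) '' T ⊆ T) ∧
    (∀ s ∈ S, ∀ s' ∈ S, (fun t => (s / s') * t) '' T ⊆ T) ∧
    (∀ t ∈ T, ∀ s ∈ S, ∀ s' ∈ S, ∀ k : ℤ, (s' / s) ^ k * t ∈ T) := by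
  have key {s s'} (hs : s ∈ S) (hs' : s' ∈ S) {t} (ht : t ∈ T) : s' / s * t ∈ T :=
    div_mul_mem_of_not_links hS hT hdiv hs hs' ht
  refine ⟨?_, ?_, ?_⟩
  · rintro s hs s' hs' _ ⟨t, ht, rfl⟩
    exact key hs hs' ht
  · rintro s hs s' hs' _ ⟨t, ht, rfl⟩
    exact key hs' hs ht
  · intro t ht s hs s' hs' k
    refine zpow_mul_mem_of_mul_mem (div_ne_zero (hS hs').ne' (hS hs).ne')
      (fun _ ↦ key hs hs') (fun _ hu ↦ ?_) k t ht
    rw [inv_div]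
    exact key hs' hs hu

/-- If `S ⊆ (0,∞)` has at least two points and divides a nonempty proper subset
`T ⊆ (0,∞)` closed in `(0,∞)`, then `(s'/s)·T ⊆ T` and `(s/s')·T ⊆ T` for all
`s, s' ∈ S`; in particular `(s'/s)^k · t ∈ T` for all `t ∈ T`, `s, s' ∈ S`, `k ∈ ℤ`. -/
theorem stmt11 (S T : Set ℝ) (hS : S ⊆ Set.Ioi 0) (hT : T ⊆ Set.Ioi 0)
    (hS2 : ∃ s ∈ S, ∃ s' ∈ S, s ≠ s')
    (hTne : T.Nonempty) (hTproper : T ≠ Set.Ioi 0)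
    (hTclosed : closure T ∩ Set.Ioi 0 ⊆ T)
    (hdiv : ¬ Links S T (Set.Ioi 0 \ T)) :
    (∀ s ∈ S, ∀ s' ∈ S, (fun t => (s' / s) * t) '' T ⊆ T) ∧
    (∀ s ∈ S, ∀ s' ∈ S, (fun t => (s / s') * t) '' T ⊆ T) ∧
    (∀ t ∈ T, ∀ s ∈ S, ∀ s' ∈ S, ∀ k : ℤ, (s' / s) ^ k * t ∈ T) :=
  stmt11_general S T hS hT hdiv
end

section
/- Let h₁, h₂ : (0,∞) → ℝ be convex, bounded, decreasing functions with lim_{x→0⁺} h₁(x) = lim_{x→0⁺} h₂(x). Let I ≠ (0,∞) be a connected component of the open set X := {x : h₁(x) < h₂(x)}. Then I contains a point of supp(h₁), where supp(h) := {x ∈ (0,∞) : h is not affine on any open neighbourhood of x}. -/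
open Set Filter Topology

/-! If `supp h₁` missed the component `I = (a, b)`, then `h₁`, being locally affine on the
connected set `I`, would be affine on `I`. At each end of `I` the difference `h₂ - h₁` has a
nonpositive limit: at an end inside `(0,∞)` because that end lies outside `{h₁ < h₂}`, at `0`
because the two limits agree. If `b < ∞`, then `h₂ - h₁` is convex on `I`, hence bounded by the
larger of its two end limits, contradicting `h₁ < h₂` on `I`. If `b = ∞`, boundedness forces
`h₁` to be constant on `I`, so `h₂ - h₁` is antitone there and bounded by its limit at `a`. -/

/-- The "support" of `h` within `(0,∞)`: points with no open neighbourhood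
`U ⊆ (0,∞)` on which `h` is affine. -/
def suppC (h : ℝ → ℝ) : Set ℝ :=
  {x : ℝ | x ∈ Set.Ioi 0 ∧ ∀ U : Set ℝ, IsOpen U → x ∈ U → U ⊆ Set.Ioi 0 →
    ¬ ∃ m c : ℝ, ∀ y ∈ U, h y = m * y + c}

section ComponentEndpoints

variable {α : Type*} [TopologicalSpace α]

theorem mem_connectedComponentIn_of_mem_closure [LocallyConnectedSpace α] {F : Set α} {x y : α}
    (hF : F ∈ 𝓝 y) (hy : y ∈ closure (connectedComponentIn F x)) :
    y ∈ connectedComponentIn F x := by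
  obtain ⟨z, hzy, hzx⟩ := mem_closure_iff_nhds.1 hy _ (connectedComponentIn_mem_nhds hF)
  rw [connectedComponentIn_eq hzx, ← connectedComponentIn_eq hzy]
  exact mem_connectedComponentIn (mem_of_mem_nhds hF)

variable [ConditionallyCompleteLinearOrder α] [OrderTopology α] [DenselyOrdered α]

theorem IsOpen.csInf_notMem [NoMinOrder α] {s : Set α} (hs : IsOpen s) (hbdd : BddBelow s) :
    sInf s ∉ s := fun h =>
  let ⟨_, hys, hy⟩ := (hs.eventually_mem h).exists_lt
  (csInf_le hbdd hy).not_gt hys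

theorem IsOpen.csSup_notMem [NoMaxOrder α] {s : Set α} (hs : IsOpen s) (hbdd : BddAbove s) :
    sSup s ∉ s := fun h =>
  let ⟨_, hys, hy⟩ := (hs.eventually_mem h).exists_gt
  (le_csSup hbdd hy).not_gt hys

variable [LocallyConnectedSpace α] {F : Set α} {x : α}

theorem csInf_connectedComponentIn_notMem [NoMinOrder α] (hF : IsOpen F) (hx : x ∈ F)
    (hbdd : BddBelow (connectedComponentIn F x)) : sInf (connectedComponentIn F x) ∉ F :=
  fun h => hF.connectedComponentIn.csInf_notMem hbdd <| mem_connectedComponentIn_of_mem_closure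
    (hF.mem_nhds h) (csInf_mem_closure ⟨x, mem_connectedComponentIn hx⟩ hbdd)

theorem csSup_connectedComponentIn_notMem [NoMaxOrder α] (hF : IsOpen F) (hx : x ∈ F)
    (hbdd : BddAbove (connectedComponentIn F x)) : sSup (connectedComponentIn F x) ∉ F :=
  fun h => hF.connectedComponentIn.csSup_notMem hbdd <| mem_connectedComponentIn_of_mem_closure
    (hF.mem_nhds h) (csSup_mem_closure ⟨x, mem_connectedComponentIn hx⟩ hbdd)

theorem csInf_connectedComponentIn_lt [NoMinOrder α] (hF : IsOpen F) (hx : x ∈ F)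
    (hbdd : BddBelow (connectedComponentIn F x)) : sInf (connectedComponentIn F x) < x :=
  (csInf_le hbdd (mem_connectedComponentIn hx)).lt_of_ne fun h =>
    csInf_connectedComponentIn_notMem hF hx hbdd (by rwa [h])

theorem lt_csSup_connectedComponentIn [NoMaxOrder α] (hF : IsOpen F) (hx : x ∈ F)
    (hbdd : BddAbove (connectedComponentIn F x)) : x < sSup (connectedComponentIn F x) :=
  (le_csSup hbdd (mem_connectedComponentIn hx)).lt_of_ne fun h =>
    csSup_connectedComponentIn_notMem hF hx hbdd (by rwa [← h])

end ComponentEndpoints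

theorem ConvexOn.le_max_of_tendsto {g : ℝ → ℝ} {a b d₁ d₂ x : ℝ} (hg : ConvexOn ℝ (Ioo a b) g)
    (ha : Tendsto g (𝓝[>] a) (𝓝 d₁)) (hb : Tendsto g (𝓝[<] b) (𝓝 d₂)) (hx : x ∈ Ioo a b) :
    g x ≤ max d₁ d₂ := by
  have hsegment {u v : ℝ} (hu : u ∈ Ioo a x) (hv : v ∈ Ioo x b) : g x ≤ max (g u) (g v) :=
    hg.le_on_segment ⟨hu.1, hu.2.trans hx.2⟩ ⟨hx.1.trans hv.1, hv.2⟩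
      (Icc_subset_segment ⟨hu.2.le, hv.1.le⟩)
  have hleft {v : ℝ} (hv : v ∈ Ioo x b) : g x ≤ max d₁ (g v) :=
    ge_of_tendsto (ha.max tendsto_const_nhds)
      (eventually_of_mem (Ioo_mem_nhdsGT hx.1) fun _ hu => hsegment hu hv)
  exact ge_of_tendsto (tendsto_const_nhds.max hb)
    (eventually_of_mem (Ioo_mem_nhdsLT hx.2) fun _ hv => hleft hv)

theorem AntitoneOn.le_of_tendsto_nhdsGT {α β : Type*} [LinearOrder α] [TopologicalSpace α]
    [OrderTopology α] [DenselyOrdered α] [Preorder β] [TopologicalSpace β] [OrderClosedTopology β]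
    {g : α → β} {a x : α} {d : β} (hg : AntitoneOn g (Ioi a)) (ha : Tendsto g (𝓝[>] a) (𝓝 d))
    (hx : a < x) : g x ≤ d :=
  have : (𝓝[>] a).NeBot := nhdsGT_neBot_of_exists_gt ⟨x, hx⟩
  ge_of_tendsto ha (eventually_of_mem (Ioo_mem_nhdsGT hx) fun _ hu => hg hu.1 hx hu.2.le)

theorem ConvexOn.sub_of_eqOn_affine {f g : ℝ → ℝ} {s : Set ℝ} {m c : ℝ} (hf : ConvexOn ℝ s f)
    (hg : ∀ x ∈ s, g x = m * x + c) : ConvexOn ℝ s fun x => f x - g x :=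
  (hf.sub (((LinearMap.mul ℝ ℝ m).concaveOn hf.1).add (concaveOn_const c hf.1))).congr
    fun x hx => by simp [hg x hx]

theorem eq_zero_of_abs_affine_le {m c a C : ℝ} (h : ∀ x, a < x → |m * x + c| ≤ C) : m = 0 := by
  by_contra hm
  have hlin : Tendsto (fun x => |m| * x - |c|) atTop atTop :=
    tendsto_atTop_add_const_right _ _ (tendsto_id.const_mul_atTop (abs_pos.2 hm))
  obtain ⟨x, hxa, hxC⟩ := ((eventually_gt_atTop a).and (hlin.eventually_gt_atTop C)).exists
  have : |m| * x ≤ |m * x| := abs_mul m x ▸ mul_le_mul_of_nonneg_left (le_abs_self x) (abs_nonneg m)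
  linarith [h x hxa, abs_sub_abs_le_abs_add (m * x) c]

def IsAffineOn (h : ℝ → ℝ) (s : Set ℝ) : Prop :=
  ∃ m c : ℝ, ∀ x ∈ s, h x = m * x + c

theorem eventuallyEq_affine_iff {h : ℝ → ℝ} {x m c m' c' : ℝ}
    (he : h =ᶠ[𝓝 x] fun y => m' * y + c') :
    (h =ᶠ[𝓝 x] fun y => m * y + c) ↔ m = m' ∧ c = c' := by
  refine ⟨fun h' => ?_, fun ⟨hm, hc⟩ => hm ▸ hc ▸ he⟩
  have hEq := h'.symm.trans he
  have hm : m = m' := by simpa using hEq.deriv_eq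
  have hc := hEq.eq_of_nhds
  simp only [hm, add_right_inj] at hc
  exact ⟨hm, hc⟩

theorem IsPreconnected.isAffineOn_of_eventuallyEq {s : Set ℝ} {h : ℝ → ℝ}
    (hs : IsPreconnected s) (hloc : ∀ x ∈ s, ∃ m c : ℝ, h =ᶠ[𝓝 x] fun y => m * y + c) :
    IsAffineOn h s := by
  rcases s.eq_empty_or_nonempty with rfl | ⟨x₀, hx₀⟩
  · exact ⟨0, 0, by simp⟩
  obtain ⟨m, c, h₀⟩ := hloc x₀ hx₀
  -- "`h` has the same affine germs at `x` and `y`" is an equivalence relation with open classes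
  let P : ℝ → ℝ → Prop := fun x y => ∀ m c : ℝ,
    (h =ᶠ[𝓝 x] fun z => m * z + c) ↔ (h =ᶠ[𝓝 y] fun z => m * z + c)
  have hP {y : ℝ} (hy : y ∈ s) : P x₀ y := by
    refine hs.induction₂ P (fun x hx => ?_)
      (fun _ _ _ _ _ _ hxy hyz m c => (hxy m c).trans (hyz m c))
      (fun _ _ _ _ hxy m c => (hxy m c).symm) hx₀ hy
    obtain ⟨m', c', he⟩ := hloc x hx
    filter_upwards [nhdsWithin_le_nhds he.eventuallyEq_nhds] with y hy m c
    rw [eventuallyEq_affine_iff he, eventuallyEq_affine_iff hy]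
  exact ⟨m, c, fun y hy => ((hP hy m c).1 h₀).eq_of_nhds⟩

theorem exists_eventuallyEq_affine_of_notMem_suppC {h : ℝ → ℝ} {x : ℝ} (hx : 0 < x)
    (hs : x ∉ suppC h) : ∃ m c : ℝ, h =ᶠ[𝓝 x] fun y => m * y + c := by
  simp only [suppC, mem_ofPred_eq, not_and, not_forall, not_not] at hs
  obtain ⟨U, hU, hxU, -, m, c, hmc⟩ := hs hx
  exact ⟨m, c, eventually_of_mem (hU.mem_nhds hxU) hmc⟩

section LtSet

variable {h₁ h₂ : ℝ → ℝ} {x₀ : ℝ}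

def ltSet (h₁ h₂ : ℝ → ℝ) : Set ℝ := {x | x ∈ Ioi 0 ∧ h₁ x < h₂ x}

theorem isOpen_ltSet (hc₁ : ContinuousOn h₁ (Ioi 0)) (hc₂ : ContinuousOn h₂ (Ioi 0)) :
    IsOpen (ltSet h₁ h₂) := by
  convert (hc₂.sub hc₁).isOpen_inter_preimage isOpen_Ioi (isOpen_Ioi (a := 0)) using 1
  ext
  simp [ltSet]

theorem connectedComponentIn_ltSet_subset_Ioi :
    connectedComponentIn (ltSet h₁ h₂) x₀ ⊆ Ioi 0 :=
  fun _ hx => (connectedComponentIn_subset _ _ hx).1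

theorem bddBelow_connectedComponentIn_ltSet : BddBelow (connectedComponentIn (ltSet h₁ h₂) x₀) :=
  ⟨0, fun _ hx => (connectedComponentIn_ltSet_subset_Ioi hx).le⟩

theorem exists_nonpos_tendsto_sub_of_notMem_ltSet (hc₁ : ContinuousOn h₁ (Ioi 0))
    (hc₂ : ContinuousOn h₂ (Ioi 0)) {p : ℝ} (hp : 0 < p) (hpX : p ∉ ltSet h₁ h₂) :
    ∃ d ≤ 0, Tendsto (fun x => h₂ x - h₁ x) (𝓝 p) (𝓝 d) :=
  ⟨_, sub_nonpos.2 (not_lt.1 fun h => hpX ⟨hp, h⟩),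
    ((hc₂.sub hc₁).continuousAt (Ioi_mem_nhds hp)).tendsto⟩

theorem exists_nonpos_tendsto_sub_nhdsGT_csInf (hc₁ : ContinuousOn h₁ (Ioi 0))
    (hc₂ : ContinuousOn h₂ (Ioi 0))
    (hlim : ∃ l : ℝ, Tendsto h₁ (𝓝[>] 0) (𝓝 l) ∧ Tendsto h₂ (𝓝[>] 0) (𝓝 l))
    (hx₀ : x₀ ∈ ltSet h₁ h₂) :
    ∃ d ≤ 0, Tendsto (fun x => h₂ x - h₁ x)
      (𝓝[>] sInf (connectedComponentIn (ltSet h₁ h₂) x₀)) (𝓝 d) := by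
  have ha0 : 0 ≤ sInf (connectedComponentIn (ltSet h₁ h₂) x₀) :=
    le_csInf ⟨x₀, mem_connectedComponentIn hx₀⟩ fun _ hx =>
      (connectedComponentIn_ltSet_subset_Ioi hx).le
  rcases ha0.eq_or_lt with h0 | ha
  · obtain ⟨l, hl₁, hl₂⟩ := hlim
    exact ⟨0, le_rfl, h0 ▸ sub_self l ▸ hl₂.sub hl₁⟩
  · obtain ⟨d, hd, hlim⟩ := exists_nonpos_tendsto_sub_of_notMem_ltSet hc₁ hc₂ ha <|
      csInf_connectedComponentIn_notMem (isOpen_ltSet hc₁ hc₂) hx₀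
        bddBelow_connectedComponentIn_ltSet
    exact ⟨d, hd, hlim.mono_left nhdsWithin_le_nhds⟩

theorem exists_nonpos_tendsto_sub_nhdsLT_csSup (hc₁ : ContinuousOn h₁ (Ioi 0))
    (hc₂ : ContinuousOn h₂ (Ioi 0)) (hx₀ : x₀ ∈ ltSet h₁ h₂)
    (hbdd : BddAbove (connectedComponentIn (ltSet h₁ h₂) x₀)) :
    ∃ d ≤ 0, Tendsto (fun x => h₂ x - h₁ x)
      (𝓝[<] sSup (connectedComponentIn (ltSet h₁ h₂) x₀)) (𝓝 d) := by
  have hX := isOpen_ltSet hc₁ hc₂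
  obtain ⟨d, hd, hlim⟩ := exists_nonpos_tendsto_sub_of_notMem_ltSet hc₁ hc₂
    (hx₀.1.trans (lt_csSup_connectedComponentIn hX hx₀ hbdd))
    (csSup_connectedComponentIn_notMem hX hx₀ hbdd)
  exact ⟨d, hd, hlim.mono_left nhdsWithin_le_nhds⟩

theorem not_isAffineOn_connectedComponentIn_ltSet_of_bddAbove (hc₁ : ContinuousOn h₁ (Ioi 0))
    (hc₂ : ConvexOn ℝ (Ioi 0) h₂)
    (hlim : ∃ l : ℝ, Tendsto h₁ (𝓝[>] 0) (𝓝 l) ∧ Tendsto h₂ (𝓝[>] 0) (𝓝 l))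
    (hx₀ : x₀ ∈ ltSet h₁ h₂) (hbdd : BddAbove (connectedComponentIn (ltSet h₁ h₂) x₀)) :
    ¬ IsAffineOn h₁ (connectedComponentIn (ltSet h₁ h₂) x₀) := by
  rintro ⟨m, c, haff⟩
  set I := connectedComponentIn (ltSet h₁ h₂) x₀
  have hcont₂ := hc₂.continuousOn isOpen_Ioi
  have hX := isOpen_ltSet hc₁ hcont₂
  have hIoo : Ioo (sInf I) (sSup I) ⊆ I := (isConnected_connectedComponentIn_iff.2 hx₀)
    |>.Ioo_csInf_csSup_subset bddBelow_connectedComponentIn_ltSet hbdd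
  have hconv : ConvexOn ℝ (Ioo (sInf I) (sSup I)) fun x => h₂ x - h₁ x :=
    (hc₂.subset (hIoo.trans connectedComponentIn_ltSet_subset_Ioi) (convex_Ioo _ _))
      |>.sub_of_eqOn_affine fun x hx => haff x (hIoo hx)
  obtain ⟨d₁, hd₁, hleft⟩ := exists_nonpos_tendsto_sub_nhdsGT_csInf hc₁ hcont₂ hlim hx₀
  obtain ⟨d₂, hd₂, hright⟩ := exists_nonpos_tendsto_sub_nhdsLT_csSup hc₁ hcont₂ hx₀ hbdd
  have := hconv.le_max_of_tendsto hleft hright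
    ⟨csInf_connectedComponentIn_lt hX hx₀ bddBelow_connectedComponentIn_ltSet,
      lt_csSup_connectedComponentIn hX hx₀ hbdd⟩
  linarith [max_le hd₁ hd₂, hx₀.2]

theorem not_isAffineOn_connectedComponentIn_ltSet_of_not_bddAbove
    (hc₁ : ContinuousOn h₁ (Ioi 0)) (hc₂ : ContinuousOn h₂ (Ioi 0))
    (hb : ∃ C : ℝ, ∀ x ∈ Ioi (0 : ℝ), |h₁ x| ≤ C) (hm₂ : AntitoneOn h₂ (Ioi 0))
    (hlim : ∃ l : ℝ, Tendsto h₁ (𝓝[>] 0) (𝓝 l) ∧ Tendsto h₂ (𝓝[>] 0) (𝓝 l))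
    (hx₀ : x₀ ∈ ltSet h₁ h₂) (hbdd : ¬ BddAbove (connectedComponentIn (ltSet h₁ h₂) x₀)) :
    ¬ IsAffineOn h₁ (connectedComponentIn (ltSet h₁ h₂) x₀) := by
  rintro ⟨m, c, haff⟩
  set I := connectedComponentIn (ltSet h₁ h₂) x₀
  have hIoi : Ioi (sInf I) ⊆ I := isPreconnected_connectedComponentIn.Ioi_csInf_subset
    bddBelow_connectedComponentIn_ltSet hbdd
  have hIpos : I ⊆ Ioi 0 := connectedComponentIn_ltSet_subset_Ioi
  obtain ⟨C, hC⟩ := hb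
  have hm : m = 0 := eq_zero_of_abs_affine_le fun x hx => haff x (hIoi hx) ▸ hC x (hIpos (hIoi hx))
  have hanti : AntitoneOn (fun x => h₂ x - h₁ x) (Ioi (sInf I)) := fun u hu v hv huv => by
    simp only [haff u (hIoi hu), haff v (hIoi hv), hm, zero_mul, zero_add]
    linarith [hm₂ (hIpos (hIoi hu)) (hIpos (hIoi hv)) huv]
  obtain ⟨d₁, hd₁, hleft⟩ := exists_nonpos_tendsto_sub_nhdsGT_csInf hc₁ hc₂ hlim hx₀
  have := hanti.le_of_tendsto_nhdsGT hleft
    (csInf_connectedComponentIn_lt (isOpen_ltSet hc₁ hc₂) hx₀ bddBelow_connectedComponentIn_ltSet)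
  linarith [hx₀.2]

end LtSet

theorem stmt12_general (h₁ h₂ : ℝ → ℝ)
    (hc₁ : ConvexOn ℝ (Set.Ioi 0) h₁) (hc₂ : ConvexOn ℝ (Set.Ioi 0) h₂)
    (hb : ∃ C : ℝ, ∀ x ∈ Set.Ioi (0 : ℝ), |h₁ x| ≤ C ∧ |h₂ x| ≤ C)
    (hm₂ : AntitoneOn h₂ (Set.Ioi 0))
    (hlim : ∃ l : ℝ, Tendsto h₁ (nhdsWithin 0 (Set.Ioi 0)) (nhds l) ∧
      Tendsto h₂ (nhdsWithin 0 (Set.Ioi 0)) (nhds l))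
    (x₀ : ℝ) (hx₀ : x₀ ∈ {x : ℝ | x ∈ Set.Ioi 0 ∧ h₁ x < h₂ x})
    (I : Set ℝ) (hI : I = connectedComponentIn {x : ℝ | x ∈ Set.Ioi 0 ∧ h₁ x < h₂ x} x₀) :
    (I ∩ suppC h₁).Nonempty := by
  change x₀ ∈ ltSet h₁ h₂ at hx₀
  change I = connectedComponentIn (ltSet h₁ h₂) x₀ at hI
  subst hI
  have hcont₁ := hc₁.continuousOn isOpen_Ioi
  by_contra hne
  have haff : IsAffineOn h₁ (connectedComponentIn (ltSet h₁ h₂) x₀) :=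
    isPreconnected_connectedComponentIn.isAffineOn_of_eventuallyEq fun x hx =>
      exists_eventuallyEq_affine_of_notMem_suppC (connectedComponentIn_ltSet_subset_Ioi hx)
        fun hs => hne ⟨x, hx, hs⟩
  by_cases hbdd : BddAbove (connectedComponentIn (ltSet h₁ h₂) x₀)
  · exact not_isAffineOn_connectedComponentIn_ltSet_of_bddAbove hcont₁ hc₂ hlim hx₀ hbdd haff
  · exact not_isAffineOn_connectedComponentIn_ltSet_of_not_bddAbove hcont₁
      (hc₂.continuousOn isOpen_Ioi) (hb.imp fun _ hC x hx => (hC x hx).1) hm₂ hlim hx₀ hbdd haff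

/-- For convex, bounded, decreasing `h₁, h₂` on `(0,∞)` with equal limits at `0⁺`,
every connected component `I ≠ (0,∞)` of `{x : h₁ x < h₂ x}` meets `supp h₁`. -/
theorem stmt12 (h₁ h₂ : ℝ → ℝ)
    (hc₁ : ConvexOn ℝ (Set.Ioi 0) h₁) (hc₂ : ConvexOn ℝ (Set.Ioi 0) h₂)
    (hb : ∃ C : ℝ, ∀ x ∈ Set.Ioi (0 : ℝ), |h₁ x| ≤ C ∧ |h₂ x| ≤ C)
    (hm₁ : AntitoneOn h₁ (Set.Ioi 0)) (hm₂ : AntitoneOn h₂ (Set.Ioi 0))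
    (hlim : ∃ l : ℝ, Tendsto h₁ (nhdsWithin 0 (Set.Ioi 0)) (nhds l) ∧
      Tendsto h₂ (nhdsWithin 0 (Set.Ioi 0)) (nhds l))
    (x₀ : ℝ) (hx₀ : x₀ ∈ {x : ℝ | x ∈ Set.Ioi 0 ∧ h₁ x < h₂ x})
    (I : Set ℝ) (hI : I = connectedComponentIn {x : ℝ | x ∈ Set.Ioi 0 ∧ h₁ x < h₂ x} x₀)
    (hIne : I ≠ Set.Ioi 0) :
    (I ∩ suppC h₁).Nonempty :=
  stmt12_general h₁ h₂ hc₁ hc₂ hb hm₂ hlim x₀ hx₀ I hI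
end

section
/- Let h₁, h₂ : (0,∞) → ℝ be convex. Then every boundary point of X(h₁,h₂) := {x : h₁(x) < h₂(x)} that is not a simple crossing point of h₁ and h₂ lies in supp(h₂), where a simple crossing point is a point x such that for some r > 1, (x/r, x) ⊆ X(h₁,h₂) and (x, xr) ⊆ X(h₂,h₁), or vice versa; and supp(h) is the set of points near which h is not affine. -/
open Set

/-- The region of `(0,∞)` where `h₁ < h₂`. -/
def domRegion (h₁ h₂ : ℝ → ℝ) : Set ℝ :=
  {x : ℝ | x ∈ Set.Ioi 0 ∧ h₁ x < h₂ x}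

/-- Simple crossing points of `h₁` and `h₂`: points `x` such that for some `r > 1`,
`(x/r, x)` lies in one of the strict-domination regions and `(x, xr)` in the other. -/
def simpleCrossings (h₁ h₂ : ℝ → ℝ) : Set ℝ :=
  {x : ℝ | x ∈ Set.Ioi 0 ∧ ∃ r > (1 : ℝ),
    (Set.Ioo (x / r) x ⊆ domRegion h₁ h₂ ∧ Set.Ioo x (x * r) ⊆ domRegion h₂ h₁) ∨
    (Set.Ioo (x / r) x ⊆ domRegion h₂ h₁ ∧ Set.Ioo x (x * r) ⊆ domRegion h₁ h₂)}

/-- For convex `h₁, h₂` on `(0,∞)`: every boundary point (in `(0,∞)`) of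
`X(h₁,h₂) = {x : h₁ x < h₂ x}` that is not a simple crossing point lies in `supp h₂`. -/
theorem stmt13 (h₁ h₂ : ℝ → ℝ)
    (hc₁ : ConvexOn ℝ (Set.Ioi 0) h₁) (hc₂ : ConvexOn ℝ (Set.Ioi 0) h₂) :
    ∀ x ∈ frontier (domRegion h₁ h₂) ∩ Set.Ioi 0,
      x ∉ simpleCrossings h₁ h₂ → x ∈ suppC h₂ := by
  rintro x ⟨hxf, hx0⟩ hnc
  by_contra hns
  simp only [suppC, mem_setOf_eq, not_and, not_forall, not_not] at hns
  obtain ⟨U, hUopen, hxU, hUsub, m, c, hUaff⟩ := hns hx0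
  have hx0' : (0:ℝ) < x := hx0
  obtain ⟨ε, hε, hball⟩ := Metric.isOpen_iff.1 hUopen x hxU
  set δ : ℝ := min ε (x/2) with hδdef
  have hδ : 0 < δ := lt_min hε (by linarith)
  have hδε : δ ≤ ε := min_le_left _ _
  have hδx : 0 < x - δ := by
    have : δ ≤ x/2 := min_le_right _ _
    linarith
  set I : Set ℝ := Set.Ioo (x - δ) (x + δ) with hIdef
  have hIU : I ⊆ U := by
    intro y hy
    apply hball
    rw [Real.ball_eq_Ioo]
    exact ⟨by linarith [hy.1], by linarith [hy.2]⟩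
  have hI0 : I ⊆ Set.Ioi 0 := fun y hy => hUsub (hIU hy)
  have hxI : x ∈ I := ⟨by linarith, by linarith⟩
  set f : ℝ → ℝ := fun y => h₁ y - (m * y + c) with hfdef
  have hf : ConvexOn ℝ I f := by
    refine ⟨convex_Ioo _ _, ?_⟩
    intro p hp q hq t s ht hs hts
    have h1 := hc₁.2 (hI0 hp) (hI0 hq) ht hs hts
    have hs1 : s = 1 - t := by linarith
    subst hs1
    simp only [smul_eq_mul, hfdef] at h1 ⊢
    ring_nf at h1 ⊢
    linarith
  have hfc : ContinuousOn f I := by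
    have h1 : ContinuousOn h₁ I :=
      (hc₁.continuousOn isOpen_Ioi).mono hI0
    exact h1.sub (Continuous.continuousOn (by continuity))
  have hxcl : x ∈ closure (domRegion h₁ h₂) := frontier_subset_closure hxf
  have hxni : x ∉ interior (domRegion h₁ h₂) := fun h => hxf.2 h
  have hfx_le : f x ≤ 0 := by
    by_contra hpos
    push_neg at hpos
    have hV : IsOpen (I ∩ f ⁻¹' Set.Ioi 0) :=
      hfc.isOpen_inter_preimage isOpen_Ioo isOpen_Ioi
    obtain ⟨y, ⟨hyI, hyf⟩, hy0, hylt⟩ :=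
      mem_closure_iff.1 hxcl _ hV ⟨hxI, hpos⟩
    have haff := hUaff y (hIU hyI)
    simp only [hfdef, Set.mem_preimage, Set.mem_Ioi] at hyf
    rw [haff] at hylt
    linarith
  have hfx_ge : (0:ℝ) ≤ f x := by
    by_contra hneg
    push_neg at hneg
    have hV : IsOpen (I ∩ f ⁻¹' Set.Iio 0) :=
      hfc.isOpen_inter_preimage isOpen_Ioo isOpen_Iio
    apply hxni
    apply mem_interior.2
    refine ⟨I ∩ f ⁻¹' Set.Iio 0, ?_, hV, ⟨hxI, hneg⟩⟩
    rintro y ⟨hyI, hyf⟩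
    have haff := hUaff y (hIU hyI)
    simp only [hfdef, Set.mem_preimage, Set.mem_Iio] at hyf
    exact ⟨hI0 hyI, by rw [haff]; linarith⟩
  have hfx : f x = 0 := le_antisymm hfx_le hfx_ge
  obtain ⟨a, haI, ha0, halt⟩ := mem_closure_iff.1 hxcl I isOpen_Ioo hxI
  have hfa : f a < 0 := by
    have haff := hUaff a (hIU haI)
    simp only [hfdef]
    rw [← haff]; linarith
  have hane : a ≠ x := fun h => by rw [h, hfx] at hfa; exact lt_irrefl _ hfa
  have ha0' : (0:ℝ) < a := ha0
  rcases lt_or_gt_of_ne hane with hax | hax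
  · -- a < x : negative on (a,x), positive on (x, x+δ)
    have hneg : ∀ y ∈ Set.Ioo a x, f y < 0 := by
      rintro y ⟨hy1, hy2⟩
      by_contra h
      push_neg at h
      have hs := hf.slope_mono_adjacent haI hxI hy1 hy2
      rw [div_le_div_iff₀ (by linarith) (by linarith)] at hs
      nlinarith [hs, mul_pos (neg_pos.2 hfa) (sub_pos.2 hy2), mul_nonneg h (sub_pos.2 hy1).le]
    have hpos : ∀ y ∈ Set.Ioo x (x+δ), 0 < f y := by
      rintro y ⟨hy1, hy2⟩
      have hyI : y ∈ I := ⟨by linarith, hy2⟩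
      have hs := hf.slope_mono_adjacent haI hyI hax hy1
      rw [div_le_div_iff₀ (by linarith) (by linarith)] at hs
      nlinarith [hs, mul_pos (neg_pos.2 hfa) (sub_pos.2 hy1), sub_pos.2 hax]
    set r : ℝ := min ((x+δ)/x) (x/a) with hrdef
    have hr1 : 1 < r := by
      apply lt_min
      · rw [lt_div_iff₀ hx0']; linarith
      · rw [lt_div_iff₀ ha0']; linarith [haI.1]
    have hr0 : (0:ℝ) < r := by linarith
    have hxra : a ≤ x / r := by
      have h1 : r ≤ x / a := min_le_right _ _
      rw [le_div_iff₀ ha0'] at h1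
      rw [le_div_iff₀ hr0]
      linarith [mul_comm a r, mul_comm r a, h1]
    have hxr2 : x * r ≤ x + δ := by
      have h1 : r ≤ (x+δ)/x := min_le_left _ _
      rw [le_div_iff₀ hx0'] at h1
      linarith [mul_comm x r, h1]
    refine hnc ⟨hx0, r, hr1, Or.inl ⟨?_, ?_⟩⟩
    · rintro y ⟨hy1, hy2⟩
      have hya : a < y := lt_of_le_of_lt hxra hy1
      have hyI : y ∈ I := ⟨by linarith [haI.1], by linarith⟩
      have hfy := hneg y ⟨hya, hy2⟩
      have haff := hUaff y (hIU hyI)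
      refine ⟨hI0 hyI, ?_⟩
      rw [haff]; simp only [hfdef] at hfy; linarith
    · rintro y ⟨hy1, hy2⟩
      have hyI : y ∈ I := ⟨by linarith, by linarith⟩
      have hfy := hpos y ⟨hy1, by linarith⟩
      have haff := hUaff y (hIU hyI)
      refine ⟨hI0 hyI, ?_⟩
      rw [haff]; simp only [hfdef] at hfy; linarith
  · -- x < a : negative on (x,a), positive on (x-δ, x)
    have hneg : ∀ y ∈ Set.Ioo x a, f y < 0 := by
      rintro y ⟨hy1, hy2⟩
      by_contra h
      push_neg at h
      have hs := hf.slope_mono_adjacent hxI haI hy1 hy2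
      rw [div_le_div_iff₀ (by linarith) (by linarith)] at hs
      nlinarith [hs, mul_pos (neg_pos.2 hfa) (sub_pos.2 hy1), mul_nonneg h (sub_pos.2 hy2).le]
    have hpos : ∀ y ∈ Set.Ioo (x-δ) x, 0 < f y := by
      rintro y ⟨hy1, hy2⟩
      have hyI : y ∈ I := ⟨hy1, by linarith⟩
      have hs := hf.slope_mono_adjacent hyI haI hy2 hax
      rw [div_le_div_iff₀ (by linarith) (by linarith)] at hs
      nlinarith [hs, mul_pos (neg_pos.2 hfa) (sub_pos.2 hy2), sub_pos.2 hax]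
    set r : ℝ := min (x/(x-δ)) (a/x) with hrdef
    have hr1 : 1 < r := by
      apply lt_min
      · rw [lt_div_iff₀ hδx]; linarith
      · rw [lt_div_iff₀ hx0']; linarith
    have hr0 : (0:ℝ) < r := by linarith
    have hxra : x - δ ≤ x / r := by
      have h1 : r ≤ x / (x-δ) := min_le_left _ _
      rw [le_div_iff₀ hδx] at h1
      rw [le_div_iff₀ hr0]
      linarith [mul_comm (x-δ) r, h1]
    have hxr2 : x * r ≤ a := by
      have h1 : r ≤ a/x := min_le_right _ _
      rw [le_div_iff₀ hx0'] at h1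
      linarith [mul_comm x r, h1]
    refine hnc ⟨hx0, r, hr1, Or.inr ⟨?_, ?_⟩⟩
    · rintro y ⟨hy1, hy2⟩
      have hyI : y ∈ I := ⟨by linarith, by linarith⟩
      have hfy := hpos y ⟨by linarith, hy2⟩
      have haff := hUaff y (hIU hyI)
      refine ⟨hI0 hyI, ?_⟩
      rw [haff]; simp only [hfdef] at hfy; linarith
    · rintro y ⟨hy1, hy2⟩
      have hya : y < a := lt_of_lt_of_le hy2 hxr2
      have hyI : y ∈ I := ⟨by linarith, by linarith [haI.2]⟩
      have hfy := hneg y ⟨hy1, hya⟩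
      have haff := hUaff y (hIU hyI)
      refine ⟨hI0 hyI, ?_⟩
      rw [haff]; simp only [hfdef] at hfy; linarith
end

section
/- For δ₁, δ₂ ∈ [0,1], the composition of the (0,δ)-DP tradeoff curves satisfies f_{0,δ₁} ⊗ f_{0,δ₂} = f_{0, δ₁+δ₂−δ₁δ₂}, and δ₁ > δ₂ implies f_{0,δ₁}(α) ≤ f_{0,δ₂}(α) for all α ∈ [0,1]. Hence the family {f_{0,δ} : δ ∈ [0,1]} is closed under composition and totally ordered pointwise. -/
/-! The lower bound `f_{0,δ} ≤ T` says exactly that `∫ φ dQ ≤ δ + ∫ φ dP` for every test `φ`.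
For a single pair this forces the common part `P ⊓ Q` to have mass at least `1 - δ₁`, so
`(P ⊓ Q) × (P' ⊓ Q')` is a common minorant of the two product measures of mass at least
`(1 - δ₁)(1 - δ₂) = 1 - δ`, which gives the same test inequality for the products.
For the upper bound, `T` is convex and antitone, so it suffices to bound it at the two corners
`0` and `1 - δ` of `f_{0,δ}`: the "or" test `1 - (1 - ψ)(1 - ψ')` of two level-`0` tests has
Type II error `(1 - δ₁)(1 - δ₂)` in the limit, and the "and" test `χ χ'` of two tests of levels
`1 - δ₁` and `1 - δ₂` has level `1 - δ` and Type II error tending to `0`. -/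

open MeasureTheory Set
open scoped ENNReal NNReal

/-- Tradeoff function `T_α(P‖Q)`: the infimum of Type II errors `1 - ∫ φ dQ` over
measurable randomized tests `φ : Ω → [0,1]` with Type I error `∫ φ dP ≤ α`. -/
noncomputable def tradeoff {Ω : Type*} [MeasurableSpace Ω] (P Q : Measure Ω) (α : ℝ) : ℝ :=
  sInf {β : ℝ | ∃ φ : Ω → ℝ, Measurable φ ∧ (∀ ω, φ ω ∈ Set.Icc (0 : ℝ) 1) ∧
    (∫ ω, φ ω ∂P) ≤ α ∧ β = 1 - ∫ ω, φ ω ∂Q}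

/-- The `(0,δ)`-DP tradeoff curve `f_{0,δ}(α) = max (0, 1 - δ - α)`. -/
noncomputable def f0d (δ : ℝ) (α : ℝ) : ℝ :=
  max 0 (1 - δ - α)

lemma le_max_zero_sub_of_convexOn {f : ℝ → ℝ} {c x : ℝ} (hconv : ConvexOn ℝ (Ici 0) f)
    (hanti : AntitoneOn f (Ici 0)) (hc : 0 ≤ c) (hf0 : f 0 ≤ c) (hfc : f c ≤ 0) (hx : 0 ≤ x) :
    f x ≤ max 0 (c - x) := by
  rcases le_or_gt c x with hcx | hxc
  · exact (hanti hc hx hcx).trans (hfc.trans (le_max_left _ _))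
  · have hcpos : 0 < c := hx.trans_lt hxc
    have ht0 : 0 ≤ x / c := div_nonneg hx hc
    have ht1 : x / c ≤ 1 := (div_le_one hcpos).2 hxc.le
    have hchord := hconv.2 (mem_Ici.2 le_rfl) (mem_Ici.2 hc) (sub_nonneg.2 ht1) ht0
      (sub_add_cancel 1 (x / c))
    simp only [smul_eq_mul, mul_zero, zero_add, div_mul_cancel₀ x hcpos.ne'] at hchord
    calc f x ≤ (1 - x / c) * f 0 + x / c * f c := hchord
      _ ≤ (1 - x / c) * c + 0 := add_le_add (mul_le_mul_of_nonneg_left hf0 (sub_nonneg.2 ht1))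
          (mul_nonpos_of_nonneg_of_nonpos ht0 hfc)
      _ = c - x := by rw [add_zero, sub_mul, one_mul, div_mul_cancel₀ x hcpos.ne']
      _ ≤ max 0 (c - x) := le_max_right _ _

section Tests

variable {Ω Ω' : Type*} [MeasurableSpace Ω] [MeasurableSpace Ω']

def IsTest (φ : Ω → ℝ) : Prop :=
  Measurable φ ∧ ∀ ω, φ ω ∈ Icc (0 : ℝ) 1

namespace IsTest

variable {φ ψ : Ω → ℝ}

lemma integrable (hφ : IsTest φ) (μ : Measure Ω) [IsFiniteMeasure μ] : Integrable φ μ :=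
  (integrable_const (1 : ℝ)).mono' hφ.1.aestronglyMeasurable
    (.of_forall fun ω => by
      rw [Real.norm_eq_abs, abs_of_nonneg (hφ.2 ω).1]; exact (hφ.2 ω).2)

lemma integral_nonneg (hφ : IsTest φ) (μ : Measure Ω) : 0 ≤ ∫ ω, φ ω ∂μ :=
  MeasureTheory.integral_nonneg fun ω => (hφ.2 ω).1

lemma integral_le_one (hφ : IsTest φ) (μ : Measure Ω) [IsProbabilityMeasure μ] :
    ∫ ω, φ ω ∂μ ≤ 1 := by
  simpa using integral_mono (hφ.integrable μ) (integrable_const (1 : ℝ)) fun ω => (hφ.2 ω).2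

lemma zero : IsTest (0 : Ω → ℝ) :=
  ⟨measurable_const, fun _ => ⟨le_rfl, zero_le_one⟩⟩

lemma indicator {A : Set Ω} (hA : MeasurableSet A) : IsTest (A.indicator 1) :=
  ⟨measurable_const.indicator hA, fun ω => by
    by_cases hω : ω ∈ A <;> simp [hω]⟩

lemma one_sub (hφ : IsTest φ) : IsTest fun ω => 1 - φ ω :=
  ⟨measurable_const.sub hφ.1, fun ω => ⟨by linarith [(hφ.2 ω).2], by linarith [(hφ.2 ω).1]⟩⟩

lemma mul_add_mul (hφ : IsTest φ) (hψ : IsTest ψ) {a b : ℝ} (ha : 0 ≤ a) (hb : 0 ≤ b)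
    (hab : a + b = 1) : IsTest fun ω => a * φ ω + b * ψ ω :=
  ⟨(hφ.1.const_mul a).add (hψ.1.const_mul b), fun ω => by
    obtain ⟨hφ0, hφ1⟩ := hφ.2 ω
    obtain ⟨hψ0, hψ1⟩ := hψ.2 ω
    exact ⟨by positivity, by nlinarith⟩⟩

lemma prod_mul (hφ : IsTest φ) {ψ : Ω' → ℝ} (hψ : IsTest ψ) :
    IsTest fun z : Ω × Ω' => φ z.1 * ψ z.2 :=
  ⟨(hφ.1.comp measurable_fst).mul (hψ.1.comp measurable_snd), fun z =>
    ⟨mul_nonneg (hφ.2 z.1).1 (hψ.2 z.2).1, mul_le_one₀ (hφ.2 z.1).2 (hψ.2 z.2).1 (hψ.2 z.2).2⟩⟩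

lemma integral_one_sub (hφ : IsTest φ) (μ : Measure Ω) [IsProbabilityMeasure μ] :
    ∫ ω, (1 - φ ω) ∂μ = 1 - ∫ ω, φ ω ∂μ := by
  rw [integral_sub (integrable_const 1) (hφ.integrable μ)]
  simp

lemma integral_mul_add_mul (hφ : IsTest φ) (hψ : IsTest ψ) (μ : Measure Ω) [IsFiniteMeasure μ]
    (a b : ℝ) : ∫ ω, (a * φ ω + b * ψ ω) ∂μ = a * ∫ ω, φ ω ∂μ + b * ∫ ω, ψ ω ∂μ := by
  rw [integral_add ((hφ.integrable μ).const_mul a) ((hψ.integrable μ).const_mul b),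
    integral_const_mul, integral_const_mul]

lemma integral_one_sub_prod_mul_one_sub (hφ : IsTest φ) {ψ : Ω' → ℝ} (hψ : IsTest ψ)
    (μ : Measure Ω) (ν : Measure Ω') [IsProbabilityMeasure μ] [IsProbabilityMeasure ν] :
    ∫ z : Ω × Ω', (1 - (1 - φ z.1) * (1 - ψ z.2)) ∂μ.prod ν
      = 1 - (1 - ∫ ω, φ ω ∂μ) * (1 - ∫ ω, ψ ω ∂ν) := by
  rw [(hφ.one_sub.prod_mul hψ.one_sub).integral_one_sub,
    integral_prod_mul (fun ω => 1 - φ ω) (fun ω => 1 - ψ ω),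
    hφ.integral_one_sub, hψ.integral_one_sub]

end IsTest

end Tests

section Tradeoff

variable {Ω : Type*} [MeasurableSpace Ω] {P Q : Measure Ω} {φ : Ω → ℝ} {α b : ℝ}

lemma tradeoff_le [IsProbabilityMeasure Q] (hφ : IsTest φ) (hα : ∫ ω, φ ω ∂P ≤ α) :
    tradeoff P Q α ≤ 1 - ∫ ω, φ ω ∂Q := by
  refine csInf_le ⟨0, ?_⟩ ⟨φ, hφ.1, hφ.2, hα, rfl⟩
  rintro _ ⟨ψ, hψm, hψb, -, rfl⟩
  linarith [IsTest.integral_le_one ⟨hψm, hψb⟩ Q]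

lemma le_tradeoff (hα : 0 ≤ α)
    (h : ∀ φ : Ω → ℝ, IsTest φ → ∫ ω, φ ω ∂P ≤ α → b ≤ 1 - ∫ ω, φ ω ∂Q) :
    b ≤ tradeoff P Q α := by
  refine le_csInf ⟨_, 0, IsTest.zero.1, IsTest.zero.2, by simpa using hα, rfl⟩ ?_
  rintro _ ⟨φ, hφm, hφb, hφP, rfl⟩
  exact h φ ⟨hφm, hφb⟩ hφP

lemma exists_isTest_of_tradeoff_lt (hα : 0 ≤ α) (h : tradeoff P Q α < b) :
    ∃ φ : Ω → ℝ, IsTest φ ∧ ∫ ω, φ ω ∂P ≤ α ∧ 1 - ∫ ω, φ ω ∂Q < b := by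
  by_contra! hcon
  exact h.not_ge (le_tradeoff hα hcon)

lemma tradeoff_nonneg [IsProbabilityMeasure Q] (hα : 0 ≤ α) : 0 ≤ tradeoff P Q α :=
  le_tradeoff hα fun _ hφ _ => sub_nonneg.2 (hφ.integral_le_one Q)

lemma tradeoff_le_one [IsProbabilityMeasure Q] (hα : 0 ≤ α) : tradeoff P Q α ≤ 1 := by
  simpa using tradeoff_le (P := P) (Q := Q) IsTest.zero (by simpa using hα)

lemma tradeoff_antitoneOn [IsProbabilityMeasure Q] : AntitoneOn (tradeoff P Q) (Ici 0) :=
  fun _ hx _ _ hxy => le_tradeoff hx fun _ hφ hφP => tradeoff_le hφ (hφP.trans hxy)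

lemma tradeoff_convexOn [IsFiniteMeasure P] [IsProbabilityMeasure Q] :
    ConvexOn ℝ (Ici 0) (tradeoff P Q) := by
  refine ⟨convex_Ici 0, fun x hx y hy a c ha hc hac => ?_⟩
  simp only [smul_eq_mul]
  refine le_of_forall_pos_le_add fun ε hε => ?_
  obtain ⟨φ, hφ, hφP, hφQ⟩ :=
    exists_isTest_of_tradeoff_lt (P := P) (Q := Q) hx (lt_add_of_pos_right _ hε)
  obtain ⟨ψ, hψ, hψP, hψQ⟩ :=
    exists_isTest_of_tradeoff_lt (P := P) (Q := Q) hy (lt_add_of_pos_right _ hε)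
  have hlevel : ∫ ω, (a * φ ω + c * ψ ω) ∂P ≤ a * x + c * y := by
    rw [hφ.integral_mul_add_mul hψ]
    exact add_le_add (mul_le_mul_of_nonneg_left hφP ha) (mul_le_mul_of_nonneg_left hψP hc)
  calc tradeoff P Q (a * x + c * y)
      ≤ 1 - ∫ ω, (a * φ ω + c * ψ ω) ∂Q := tradeoff_le (hφ.mul_add_mul hψ ha hc hac) hlevel
    _ = a * (1 - ∫ ω, φ ω ∂Q) + c * (1 - ∫ ω, ψ ω ∂Q) := by
        rw [hφ.integral_mul_add_mul hψ]; linear_combination -hac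
    _ ≤ a * (tradeoff P Q x + ε) + c * (tradeoff P Q y + ε) := by gcongr
    _ = a * tradeoff P Q x + c * tradeoff P Q y + ε := by linear_combination ε * hac

end Tradeoff

section Product

variable {Ω Ω' : Type*} [MeasurableSpace Ω] [MeasurableSpace Ω']
  {P Q : Measure Ω} {P' Q' : Measure Ω'} [IsProbabilityMeasure Q] [IsProbabilityMeasure Q']
  {x x' : ℝ}

lemma tradeoff_prod_add_le [IsProbabilityMeasure P] [IsProbabilityMeasure P']
    (hx : 0 ≤ x) (hx' : 0 ≤ x') :
    tradeoff (P.prod P') (Q.prod Q') (x + x') ≤ tradeoff P Q x * tradeoff P' Q' x' := by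
  refine le_of_forall_pos_le_add fun ε hε => ?_
  obtain ⟨ψ, hψ, hψP, hψQ⟩ :=
    exists_isTest_of_tradeoff_lt (P := P) (Q := Q) hx (lt_add_of_pos_right _ (half_pos hε))
  obtain ⟨ψ', hψ', hψP', hψQ'⟩ :=
    exists_isTest_of_tradeoff_lt (P := P') (Q := Q') hx' (lt_add_of_pos_right _ (half_pos hε))
  have hor := (hψ.one_sub.prod_mul hψ'.one_sub).one_sub
  have hlevel : ∫ z, (1 - (1 - ψ z.1) * (1 - ψ' z.2)) ∂P.prod P' ≤ x + x' := by
    rw [hψ.integral_one_sub_prod_mul_one_sub hψ']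
    nlinarith [hψ.integral_nonneg P, hψ'.integral_nonneg P']
  have hT := tradeoff_le (P := P.prod P') (Q := Q.prod Q') hor hlevel
  rw [hψ.integral_one_sub_prod_mul_one_sub hψ', sub_sub_cancel] at hT
  -- `β β' - T T' = β (β' - T') + T' (β - T)` with all four numbers in `[0, 1]`
  nlinarith [hψ.integral_le_one Q, hψ.integral_nonneg Q, tradeoff_nonneg (P := P') (Q := Q') hx',
    tradeoff_le_one (P := P') (Q := Q') hx']

lemma tradeoff_prod_mul_le [SFinite P] [SFinite P'] (hx : 0 ≤ x) (hx' : 0 ≤ x') :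
    tradeoff (P.prod P') (Q.prod Q') (x * x') ≤ tradeoff P Q x + tradeoff P' Q' x' := by
  refine le_of_forall_pos_le_add fun ε hε => ?_
  obtain ⟨χ, hχ, hχP, hχQ⟩ :=
    exists_isTest_of_tradeoff_lt (P := P) (Q := Q) hx (lt_add_of_pos_right _ (half_pos hε))
  obtain ⟨χ', hχ', hχP', hχQ'⟩ :=
    exists_isTest_of_tradeoff_lt (P := P') (Q := Q') hx' (lt_add_of_pos_right _ (half_pos hε))
  have hlevel : ∫ z, χ z.1 * χ' z.2 ∂P.prod P' ≤ x * x' := by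
    rw [integral_prod_mul χ χ']
    exact mul_le_mul hχP hχP' (hχ'.integral_nonneg P') hx
  have hT := tradeoff_le (P := P.prod P') (Q := Q.prod Q') (hχ.prod_mul hχ') hlevel
  rw [integral_prod_mul χ χ'] at hT
  nlinarith [hχ.integral_le_one Q, hχ'.integral_le_one Q']

end Product

section LowerBound

variable {Ω : Type*} [MeasurableSpace Ω] {P Q : Measure Ω} {δ : ℝ}

lemma integral_le_add_integral_of_f0d_le_tradeoff [IsProbabilityMeasure P] [IsProbabilityMeasure Q]
    (h : ∀ α ∈ Icc (0 : ℝ) 1, f0d δ α ≤ tradeoff P Q α) {φ : Ω → ℝ} (hφ : IsTest φ) :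
    ∫ ω, φ ω ∂Q ≤ δ + ∫ ω, φ ω ∂P := by
  have hα : ∫ ω, φ ω ∂P ∈ Icc (0 : ℝ) 1 := ⟨hφ.integral_nonneg P, hφ.integral_le_one P⟩
  have := (le_max_right _ _).trans ((h _ hα).trans (tradeoff_le hφ le_rfl))
  linarith

lemma f0d_le_tradeoff_of_integral_le [IsProbabilityMeasure Q]
    (h : ∀ φ : Ω → ℝ, IsTest φ → ∫ ω, φ ω ∂Q ≤ δ + ∫ ω, φ ω ∂P) {α : ℝ} (hα : 0 ≤ α) :
    f0d δ α ≤ tradeoff P Q α :=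
  le_tradeoff hα fun φ hφ hφP =>
    max_le (sub_nonneg.2 (hφ.integral_le_one Q)) (by linarith [h φ hφ])

lemma sub_le_measureReal_inf_univ [IsFiniteMeasure P] [IsProbabilityMeasure Q]
    (h : ∀ φ : Ω → ℝ, IsTest φ → ∫ ω, φ ω ∂Q ≤ δ + ∫ ω, φ ω ∂P) :
    1 - δ ≤ (P ⊓ Q).real univ := by
  have hfin : (P ⊓ Q) univ ≠ ∞ :=
    ne_top_of_le_ne_top (measure_ne_top P univ) ((inf_le_left : P ⊓ Q ≤ P) univ)
  rw [measureReal_def, ← ENNReal.ofReal_le_iff_le_toReal hfin, Measure.inf_apply .univ]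
  refine le_sInf ?_
  rintro _ ⟨t, rfl⟩
  simp only [inter_univ]
  -- `t` need not be measurable; its measurable hull has the same `P`-mass and a smaller complement
  set T := toMeasurable P t
  have hT : MeasurableSet T := measurableSet_toMeasurable P t
  have hA := h _ (IsTest.indicator hT)
  rw [integral_indicator_one hT, integral_indicator_one hT] at hA
  calc ENNReal.ofReal (1 - δ) ≤ ENNReal.ofReal (P.real T + Q.real Tᶜ) := by
        gcongr
        rw [probReal_compl_eq_one_sub hT]
        linarith
    _ = P T + Q Tᶜ := by
        rw [ENNReal.ofReal_add measureReal_nonneg measureReal_nonneg, ofReal_measureReal,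
          ofReal_measureReal]
    _ ≤ P t + Q tᶜ := by
        rw [measure_toMeasurable]
        gcongr
        exact subset_toMeasurable P t

lemma integral_le_add_integral_of_le_of_le [IsFiniteMeasure P] [IsProbabilityMeasure Q]
    {M : Measure Ω} (hMP : M ≤ P) (hMQ : M ≤ Q) (hM : 1 - δ ≤ M.real univ)
    {φ : Ω → ℝ} (hφ : IsTest φ) : ∫ ω, φ ω ∂Q ≤ δ + ∫ ω, φ ω ∂P := by
  have : IsFiniteMeasure M := isFiniteMeasure_of_le Q hMQ
  have hP : ∫ ω, φ ω ∂M ≤ ∫ ω, φ ω ∂P :=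
    integral_mono_measure hMP (.of_forall fun ω => (hφ.2 ω).1) (hφ.integrable P)
  have hQ : ∫ ω, (1 - φ ω) ∂M ≤ ∫ ω, (1 - φ ω) ∂Q :=
    integral_mono_measure hMQ (.of_forall fun ω => (hφ.one_sub.2 ω).1)
      (hφ.one_sub.integrable Q)
  rw [hφ.integral_one_sub Q, integral_sub (integrable_const 1) (hφ.integrable M),
    integral_const, smul_eq_mul, mul_one] at hQ
  linarith

end LowerBound

section Composition

variable {Ω Ω' : Type*} [MeasurableSpace Ω] [MeasurableSpace Ω']
  {P Q : Measure Ω} {P' Q' : Measure Ω'}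
  [IsProbabilityMeasure P] [IsProbabilityMeasure Q]
  [IsProbabilityMeasure P'] [IsProbabilityMeasure Q'] {δ₁ δ₂ α : ℝ}

lemma tradeoff_prod_le_f0d (hδ₁ : δ₁ ∈ Icc (0 : ℝ) 1) (hδ₂ : δ₂ ∈ Icc (0 : ℝ) 1)
    (hPQ : ∀ α ∈ Icc (0 : ℝ) 1, tradeoff P Q α ≤ f0d δ₁ α)
    (hPQ' : ∀ α ∈ Icc (0 : ℝ) 1, tradeoff P' Q' α ≤ f0d δ₂ α) (hα : 0 ≤ α) :
    tradeoff (P.prod P') (Q.prod Q') α ≤ f0d (δ₁ + δ₂ - δ₁ * δ₂) α := by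
  obtain ⟨h₁, h₁'⟩ := hδ₁
  obtain ⟨h₂, h₂'⟩ := hδ₂
  have hT₀ : tradeoff P Q 0 ≤ 1 - δ₁ := by simpa [f0d, h₁'] using hPQ 0 ⟨le_rfl, zero_le_one⟩
  have hT₀' : tradeoff P' Q' 0 ≤ 1 - δ₂ := by simpa [f0d, h₂'] using hPQ' 0 ⟨le_rfl, zero_le_one⟩
  have hT₁ : tradeoff P Q (1 - δ₁) ≤ 0 := by
    simpa [f0d] using hPQ (1 - δ₁) ⟨by linarith, by linarith⟩
  have hT₁' : tradeoff P' Q' (1 - δ₂) ≤ 0 := by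
    simpa [f0d] using hPQ' (1 - δ₂) ⟨by linarith, by linarith⟩
  rw [f0d, show 1 - (δ₁ + δ₂ - δ₁ * δ₂) - α = (1 - δ₁) * (1 - δ₂) - α by ring]
  refine le_max_zero_sub_of_convexOn tradeoff_convexOn tradeoff_antitoneOn
    (by nlinarith) ?_ ?_ hα
  · calc tradeoff (P.prod P') (Q.prod Q') 0
        = tradeoff (P.prod P') (Q.prod Q') (0 + 0) := by rw [add_zero]
      _ ≤ tradeoff P Q 0 * tradeoff P' Q' 0 := tradeoff_prod_add_le le_rfl le_rfl
      _ ≤ (1 - δ₁) * (1 - δ₂) := mul_le_mul hT₀ hT₀' (tradeoff_nonneg le_rfl) (by linarith)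
  · calc tradeoff (P.prod P') (Q.prod Q') ((1 - δ₁) * (1 - δ₂))
        ≤ tradeoff P Q (1 - δ₁) + tradeoff P' Q' (1 - δ₂) :=
          tradeoff_prod_mul_le (by linarith) (by linarith)
      _ ≤ 0 := by linarith

lemma f0d_le_tradeoff_prod (hδ₂ : δ₂ ≤ 1)
    (hPQ : ∀ α ∈ Icc (0 : ℝ) 1, f0d δ₁ α ≤ tradeoff P Q α)
    (hPQ' : ∀ α ∈ Icc (0 : ℝ) 1, f0d δ₂ α ≤ tradeoff P' Q' α) (hα : 0 ≤ α) :
    f0d (δ₁ + δ₂ - δ₁ * δ₂) α ≤ tradeoff (P.prod P') (Q.prod Q') α := by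
  have : IsFiniteMeasure (P' ⊓ Q') := isFiniteMeasure_of_le P' inf_le_left
  have hm := sub_le_measureReal_inf_univ fun _ => integral_le_add_integral_of_f0d_le_tradeoff hPQ
  have hm' := sub_le_measureReal_inf_univ fun _ => integral_le_add_integral_of_f0d_le_tradeoff hPQ'
  have hmass : 1 - (δ₁ + δ₂ - δ₁ * δ₂) ≤ ((P ⊓ Q).prod (P' ⊓ Q')).real univ := by
    rw [← univ_prod_univ, measureReal_prod_prod]
    nlinarith [mul_le_mul hm hm' (sub_nonneg.2 hδ₂) measureReal_nonneg]
  exact f0d_le_tradeoff_of_integral_le (fun _ hφ => integral_le_add_integral_of_le_of_le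
    (Measure.prod_mono inf_le_left inf_le_left) (Measure.prod_mono inf_le_right inf_le_right)
    hmass hφ) hα

end Composition

/-- Composition of `(0,δ)`-DP tradeoff curves: if `(P,Q)` and `(P',Q')` realize
`f_{0,δ₁}` and `f_{0,δ₂}`, then the product testing problem realizes
`f_{0, δ₁+δ₂-δ₁δ₂}` (i.e. `f_{0,δ₁} ⊗ f_{0,δ₂} = f_{0,δ₁+δ₂-δ₁δ₂}`), and `δ₂ < δ₁`
implies `f_{0,δ₁} ≤ f_{0,δ₂}` pointwise on `[0,1]`. -/
theorem stmt18 (δ₁ δ₂ : ℝ) (hδ₁ : δ₁ ∈ Set.Icc (0 : ℝ) 1) (hδ₂ : δ₂ ∈ Set.Icc (0 : ℝ) 1)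
    {Ω Ω' : Type*} [MeasurableSpace Ω] [MeasurableSpace Ω']
    (P Q : Measure Ω) (P' Q' : Measure Ω')
    [IsProbabilityMeasure P] [IsProbabilityMeasure Q]
    [IsProbabilityMeasure P'] [IsProbabilityMeasure Q']
    (hPQ : ∀ α ∈ Set.Icc (0 : ℝ) 1, tradeoff P Q α = f0d δ₁ α)
    (hPQ' : ∀ α ∈ Set.Icc (0 : ℝ) 1, tradeoff P' Q' α = f0d δ₂ α) :
    (∀ α ∈ Set.Icc (0 : ℝ) 1,
        tradeoff (P.prod P') (Q.prod Q') α = f0d (δ₁ + δ₂ - δ₁ * δ₂) α) ∧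
      (δ₂ < δ₁ → ∀ α ∈ Set.Icc (0 : ℝ) 1, f0d δ₁ α ≤ f0d δ₂ α) := by
  refine ⟨fun α hα => le_antisymm ?_ ?_, fun h α _ => max_le_max le_rfl (by linarith)⟩
  · exact tradeoff_prod_le_f0d hδ₁ hδ₂ (fun α hα => (hPQ α hα).le) (fun α hα => (hPQ' α hα).le)
      hα.1
  · exact f0d_le_tradeoff_prod hδ₂.2 (fun α hα => (hPQ α hα).ge) (fun α hα => (hPQ' α hα).ge)
      hα.1
end
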